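/- arXiv:2303.15194 — 4 statements merged into one kernel-verified Lean document; each statement's English description precedes it below -/
import Mathlib

section
/- For every connected graph H and every k ≥ 3, the online Ramsey number satisfies r̃(C_k, H) ≥ |V(H)| + |E(H)| − 1. In particular, r̃(C_k, C_n) ≥ 2n − 1 for every k ≥ 3 and n ≥ 3. -/
open SimpleGraph

/-- A board state: the set of red edges and the set of blue edges. -/
abbrev Board : Type := Set (Sym2 ℕ) × Set (Sym2 ℕ)

/-- The set of already colored edges of a board. -/
def Board.colored (B : Board) : Set (Sym2 ℕ) := B.1 ∪ B.2

/-- A Builder strategy selects an edge given the current board. -/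
abbrev BuilderStrat : Type := Board → Sym2 ℕ

/-- A Painter strategy colors the selected edge (true = red, false = blue). -/
abbrev PainterStrat : Type := Board → Sym2 ℕ → Bool

/-- The board after `t` rounds of play from `init`. -/
def playGame (b : BuilderStrat) (p : PainterStrat) (init : Board) : ℕ → Board
  | 0 => init
  | t + 1 =>
      let B := playGame b p init t
      let e := b B
      if p B e then (insert e B.1, B.2) else (B.1, insert e B.2)

/-- Builder's strategy is valid from `init`: along any play it always selects a
previously unselected non-loop edge. -/
def ValidFrom (b : BuilderStrat) (init : Board) : Prop :=
  ∀ p : PainterStrat, ∀ t : ℕ,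
    ¬ (b (playGame b p init t)).IsDiag ∧
      b (playGame b p init t) ∉ (playGame b p init t).colored

/-- Builder can force the winning condition `W` within `t` rounds, starting from `init`. -/
def BuilderWinsIn (init : Board) (W : Board → Prop) (t : ℕ) : Prop :=
  ∃ b : BuilderStrat, ValidFrom b init ∧
    ∀ p : PainterStrat, ∃ s, s ≤ t ∧ W (playGame b p init s)

/-- `G` contains a copy of `H`. -/
def HasCopy {α β : Type} (H : SimpleGraph α) (G : SimpleGraph β) : Prop :=
  ∃ f : α ↪ β, ∀ x y, H.Adj x y → G.Adj (f x) (f y)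

/-- The red part of the board contains a copy of `H`. -/
def RedCopy {α : Type} (H : SimpleGraph α) (B : Board) : Prop :=
  HasCopy H (fromEdgeSet B.1)

/-- The blue part of the board contains a copy of `H`. -/
def BlueCopy {α : Type} (H : SimpleGraph α) (B : Board) : Prop :=
  HasCopy H (fromEdgeSet B.2)

/-- The empty board. -/
def emptyBoard : Board := (∅, ∅)

/-- Winning condition: a red `C_k` or a blue `C_n`. -/
def WinCC (k n : ℕ) (B : Board) : Prop :=
  RedCopy (cycleGraph k) B ∨ BlueCopy (cycleGraph n) B

/-- Winning condition: a red `C_k` or a blue path on `n` vertices. -/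
def WinCP (k n : ℕ) (B : Board) : Prop :=
  RedCopy (cycleGraph k) B ∨ BlueCopy (pathGraph n) B

/-- A board consisting of a single blue cycle on the vertices `0, …, m-1`. -/
def blueCycleBoard (m : ℕ) : Board :=
  (∅, {e | ∃ i : ℕ, i < m ∧ e = s(i, (i + 1) % m)})

/-- A board consisting of a single blue path on the vertices `0, …, m-1`. -/
def bluePathBoard (m : ℕ) : Board :=
  (∅, {e | ∃ i : ℕ, i + 1 < m ∧ e = s(i, i + 1)})

/-!
Painter colours an edge red unless its endpoints are already joined by a red path. The red
graph then stays a forest, so it contains no cycle, and every blue edge joins two vertices of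
the same red tree. A blue copy of a connected `H` therefore lies inside a single red tree, which
has at least `|V(H)| - 1` edges on top of the `|E(H)|` blue ones, so Builder needs at least
`|V(H)| + |E(H)| - 1` rounds.
-/

section Copies

variable {α β : Type} {H : SimpleGraph α} {G : SimpleGraph β}

theorem hasCopy_iff_isContained : HasCopy H G ↔ H ⊑ G :=
  ⟨fun ⟨f, hf⟩ => ⟨⟨⟨f, hf _ _⟩, f.injective⟩⟩,
    fun ⟨f⟩ => ⟨f.toEmbedding, fun _ _ => f.toHom.map_adj⟩⟩

theorem not_hasCopy_cycleGraph_of_isAcyclic (hG : G.IsAcyclic) {k : ℕ} (hk : 3 ≤ k) :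
    ¬ HasCopy (cycleGraph k) G := by
  rw [hasCopy_iff_isContained]
  exact isAcyclic_iff_free_cycleGraph.mp hG k hk

theorem HasCopy.encard_edgeSet_le (h : HasCopy H G) : H.edgeSet.encard ≤ G.edgeSet.encard := by
  obtain ⟨f⟩ := hasCopy_iff_isContained.mp h
  exact ENat.card_le_card_of_injective f.mapEdgeSet.injective

end Copies

namespace SimpleGraph

variable {α β : Type} {G : SimpleGraph α}

theorem Reachable.map_of_adj_reachable {H : SimpleGraph β} {f : β → α}
    (hf : ∀ ⦃x y⦄, H.Adj x y → G.Reachable (f x) (f y)) {x y : β} (h : H.Reachable x y) :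
    G.Reachable (f x) (f y) := by
  obtain ⟨w⟩ := h
  induction w with
  | nil => rfl
  | cons hadj _ ih => exact (hf hadj).trans ih

theorem Reachable.exists_adj_dist_lt {x v : α} (h : G.Reachable x v) (hne : x ≠ v) :
    ∃ y, G.Adj x y ∧ G.dist y v < G.dist x v := by
  obtain ⟨p, hp⟩ := h.exists_walk_length_eq_dist
  cases p with
  | nil => exact absurd rfl hne
  | @cons _ y _ hadj q =>
    refine ⟨y, hadj, ?_⟩
    have := dist_le q
    rw [Walk.length_cons] at hp
    omega

theorem card_le_encard_edgeSet_add_one (v : α) (S : Finset α) (hS : ∀ x ∈ S, G.Reachable x v) :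
    (S.card : ℕ∞) ≤ G.edgeSet.encard + 1 := by
  classical
  -- each `x ≠ v` goes to an edge towards a neighbour closer to `v`; distances make this injective
  have hcloser : ∀ x ∈ S.erase v, ∃ y, G.Adj x y ∧ G.dist y v < G.dist x v := fun x hx =>
    (hS x (Finset.mem_of_mem_erase hx)).exists_adj_dist_lt (Finset.ne_of_mem_erase hx)
  choose! next hadj hdist using hcloser
  have hmaps : Set.MapsTo (fun x => s(x, next x)) ↑(S.erase v) G.edgeSet := hadj
  have hinj : Set.InjOn (fun x => s(x, next x)) ↑(S.erase v) := by
    intro a ha b hb hab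
    rcases Sym2.eq_iff.mp hab with ⟨h, -⟩ | ⟨h₁, h₂⟩
    · exact h
    · have := hdist a ha
      have := hdist b hb
      rw [h₁, h₂] at *
      omega
  calc (S.card : ℕ∞) ≤ ((S.erase v).card + 1 : ℕ) := by
        have := S.pred_card_le_card_erase (a := v)
        exact_mod_cast (by omega)
    _ = (↑(S.erase v) : Set α).encard + 1 := by
        rw [Set.encard_coe_eq_coe_finsetCard]; push_cast; rfl
    _ ≤ G.edgeSet.encard + 1 := by gcongr; exact Set.encard_le_encard_of_injOn hmaps hinj

end SimpleGraph

open Classical in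
noncomputable def forestPainter : PainterStrat := fun B e =>
  decide ¬ (e.map (fromEdgeSet B.1).connectedComponentMk).IsDiag

open Classical in
theorem forestPainter_mk_eq_true {B : Board} {x y : ℕ} :
    forestPainter B s(x, y) = true ↔ ¬ (fromEdgeSet B.1).Reachable x y := by
  rw [forestPainter, decide_eq_true_iff, Sym2.map_mk, Sym2.mk_isDiag_iff, ConnectedComponent.eq]

structure ForestInvariant (B : Board) : Prop where
  isAcyclic_red : (fromEdgeSet B.1).IsAcyclic
  reachable_red_of_blue : ∀ ⦃x y⦄, s(x, y) ∈ B.2 → (fromEdgeSet B.1).Reachable x y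

theorem ForestInvariant.step {B : Board} (h : ForestInvariant B) (e : Sym2 ℕ) :
    ForestInvariant
      (if forestPainter B e then (insert e B.1, B.2) else (B.1, insert e B.2)) := by
  induction e using Sym2.ind with | _ x y => ?_
  by_cases hxy : (fromEdgeSet B.1).Reachable x y
  · rw [if_neg (by simpa [forestPainter_mk_eq_true] using hxy)]
    refine ⟨h.isAcyclic_red, fun u v huv => ?_⟩
    rcases Set.mem_insert_iff.mp huv with huv | huv
    · rcases Sym2.eq_iff.mp huv with ⟨rfl, rfl⟩ | ⟨rfl, rfl⟩
      exacts [hxy, hxy.symm]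
    · exact h.reachable_red_of_blue huv
  · rw [if_pos (forestPainter_mk_eq_true.mpr hxy)]
    have hsup : fromEdgeSet (insert s(x, y) B.1) = fromEdgeSet B.1 ⊔ edge x y := by
      rw [Set.insert_eq, fromEdgeSet_union, sup_comm, edge]
    refine ⟨hsup ▸ h.isAcyclic_red.sup_edge_of_not_reachable hxy, fun u v huv => ?_⟩
    exact (h.reachable_red_of_blue huv).mono (fromEdgeSet_mono (Set.subset_insert _ _))

theorem forestInvariant_playGame (b : BuilderStrat) (t : ℕ) :
    ForestInvariant (playGame b forestPainter emptyBoard t) := by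
  induction t with
  | zero => exact ⟨by simp [playGame, emptyBoard], by simp [playGame, emptyBoard]⟩
  | succ t ih => exact ih.step _

theorem encard_playGame_le (b : BuilderStrat) (p : PainterStrat) (t : ℕ) :
    (playGame b p emptyBoard t).1.encard + (playGame b p emptyBoard t).2.encard ≤ t := by
  induction t with
  | zero => simp [playGame, emptyBoard]
  | succ t ih =>
    set B := playGame b p emptyBoard t
    simp only [playGame, Nat.cast_add_one]
    split
    · calc (insert (b B) B.1).encard + B.2.encard ≤ B.1.encard + 1 + B.2.encard := by
            gcongr; exact Set.encard_insert_le _ _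
        _ = B.1.encard + B.2.encard + 1 := add_right_comm _ _ _
        _ ≤ t + 1 := by gcongr
    · calc B.1.encard + (insert (b B) B.2).encard ≤ B.1.encard + (B.2.encard + 1) := by
            gcongr; exact Set.encard_insert_le _ _
        _ = B.1.encard + B.2.encard + 1 := (add_assoc _ _ _).symm
        _ ≤ t + 1 := by gcongr

theorem ForestInvariant.card_add_encard_edgeSet_le {B : Board} (hB : ForestInvariant B)
    {V : Type} [Fintype V] {H : SimpleGraph V} (hH : H.Connected) (hblue : BlueCopy H B) :
    (Fintype.card V : ℕ∞) + H.edgeSet.encard ≤ B.1.encard + B.2.encard + 1 := by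
  obtain ⟨f, hf⟩ := hblue
  obtain ⟨v₀⟩ := hH.nonempty
  have hreach : ∀ x ∈ Finset.univ.map f, (fromEdgeSet B.1).Reachable x (f v₀) := by
    simp only [Finset.mem_map, Finset.mem_univ, true_and, forall_exists_index]
    rintro _ x rfl
    exact (hH x v₀).map_of_adj_reachable fun u v huv =>
      hB.reachable_red_of_blue ((fromEdgeSet_adj _).mp (hf u v huv)).1
  have hvert : (Fintype.card V : ℕ∞) ≤ B.1.encard + 1 := by
    calc (Fintype.card V : ℕ∞) = (Finset.univ.map f).card := by simp
      _ ≤ (fromEdgeSet B.1).edgeSet.encard + 1 := card_le_encard_edgeSet_add_one _ _ hreach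
      _ ≤ B.1.encard + 1 := by
          gcongr; exact edgeSet_fromEdgeSet B.1 ▸ Set.sdiff_subset
  have hedge : H.edgeSet.encard ≤ B.2.encard :=
    (HasCopy.encard_edgeSet_le ⟨f, hf⟩).trans
      (Set.encard_le_encard (edgeSet_fromEdgeSet B.2 ▸ Set.sdiff_subset))
  calc (Fintype.card V : ℕ∞) + H.edgeSet.encard ≤ B.1.encard + 1 + B.2.encard :=
        add_le_add hvert hedge
    _ = B.1.encard + B.2.encard + 1 := add_right_comm _ _ _

theorem forestPainter_not_win {k : ℕ} (hk : 3 ≤ k) {V : Type} [Fintype V] {H : SimpleGraph V}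
    [Fintype H.edgeSet] (hH : H.Connected) (b : BuilderStrat) {s : ℕ}
    (hs : s < Fintype.card V + H.edgeSet.toFinset.card - 1) :
    ¬ (RedCopy (cycleGraph k) (playGame b forestPainter emptyBoard s) ∨
      BlueCopy H (playGame b forestPainter emptyBoard s)) := by
  have hB := forestInvariant_playGame b s
  rintro (hred | hblue)
  · exact not_hasCopy_cycleGraph_of_isAcyclic hB.isAcyclic_red hk hred
  · have hle := (hB.card_add_encard_edgeSet_le hH hblue).trans
      (add_le_add (encard_playGame_le b forestPainter s) le_rfl)
    rw [Set.encard_eq_coe_toFinset_card] at hle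
    have : Fintype.card V + H.edgeSet.toFinset.card ≤ s + 1 := by exact_mod_cast hle
    omega

theorem card_edgeFinset_cycleGraph {n : ℕ} (hn : 3 ≤ n) : (cycleGraph n).edgeFinset.card = n := by
  obtain ⟨m, rfl⟩ : ∃ m, n = m + 3 := ⟨n - 3, by omega⟩
  have h := sum_degrees_eq_twice_card_edges (cycleGraph (m + 3))
  simp only [cycleGraph_degree_three_le, Finset.sum_const, Finset.card_univ, Fintype.card_fin,
    smul_eq_mul] at h
  omega

/-- Cyman–Dzido–Lapinskas–Lo lower bound: for every connected graph `H` and `k ≥ 3`,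
`r̃(C_k, H) ≥ |V(H)| + |E(H)| - 1`; in particular `r̃(C_k, C_n) ≥ 2n - 1`. -/
theorem online_ramsey_cycle_lower_bound :
    (∀ (k : ℕ), 3 ≤ k → ∀ (V : Type) (_ : Fintype V) (H : SimpleGraph V)
      (_ : DecidableRel H.Adj) (_ : Fintype H.edgeSet), H.Connected →
      ∀ b : BuilderStrat, ValidFrom b emptyBoard →
        ∃ p : PainterStrat, ∀ s : ℕ,
          s < Fintype.card V + H.edgeSet.toFinset.card - 1 →
            ¬ (RedCopy (SimpleGraph.cycleGraph k) (playGame b p emptyBoard s) ∨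
               BlueCopy H (playGame b p emptyBoard s))) ∧
    (∀ k n : ℕ, 3 ≤ k → 3 ≤ n →
      ∀ b : BuilderStrat, ValidFrom b emptyBoard →
        ∃ p : PainterStrat, ∀ s : ℕ, s < 2 * n - 1 →
          ¬ WinCC k n (playGame b p emptyBoard s)) := by
  refine ⟨fun k hk V _ H _ _ hH b _ =>
      ⟨forestPainter, fun s hs => forestPainter_not_win hk hH b hs⟩,
    fun k n hk hn b _ => ⟨forestPainter, fun s hs => ?_⟩⟩
  obtain ⟨m, rfl⟩ : ∃ m, n = m + 1 := ⟨n - 1, by omega⟩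
  refine forestPainter_not_win hk cycleGraph_connected b ?_
  rw [Fintype.card_fin, Set.toFinset_card, ← edgeFinset_card, card_edgeFinset_cycleGraph hn]
  omega
end

section
/- Triangle inequality for online Ramsey games: for any graphs F, G, H and any colored graph C already on the board, r̃_C(G,H) ≤ r̃_C(G,F) + r̃_{F_b}(G,H), where F_b denotes a blue copy of F. In particular, with empty initial board, r̃(G,H) ≤ r̃(G,F) + r̃_{F_b}(G,H). -/
open SimpleGraph

/-- The online Ramsey number (possibly `⊤` if Builder cannot win) of the game with
initial board `init` and winning condition `W`. -/
noncomputable def rtilde (init : Board) (W : Board → Prop) : ℕ∞ :=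
  sInf {m : ℕ∞ | ∃ t : ℕ, BuilderWinsIn init W t ∧ m = (t : ℕ∞)}

/-- The board consisting of a blue copy of `F` (on the canonical vertices). -/
def blueGraphBoard {m : ℕ} (F : SimpleGraph (Fin m)) : Board :=
  (∅, {e | ∃ i j : Fin m, F.Adj i j ∧ e = s((i : ℕ), (j : ℕ))})


/-!
Builder first plays an optimal strategy for `(G, F)` from `C`. If it ends with a red `G` we are
done; otherwise it ends with a blue `F`, and Builder continues with an optimal strategy for
`(G, H)` from the board `F_b`, transported along an embedding `φ : ℕ ↪ ℕ` that sends `F_b` onto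
that blue copy. Moves whose images are already coloured are skipped, Painter's colours being read
off the board, so the transported game needs no more rounds than the original one, and its board
embeds (colours included) into the real board; hence a red `G` or a blue `H` appears in the real
game as soon as it does in the transported one.
-/

noncomputable section

open scoped Classical

namespace Board

def comap (φ : ℕ → ℕ) (B : Board) : Board :=
  (Sym2.map φ ⁻¹' B.1, Sym2.map φ ⁻¹' B.2)

def ExtendsTo (B B' : Board) : Prop :=
  B ≤ B' ∧ ∀ e ∈ B.colored, e ∈ B'.1 → e ∈ B.1

lemma colored_mono {B B' : Board} (h : B ≤ B') : B.colored ⊆ B'.colored :=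
  Set.union_subset_union h.1 h.2

lemma comap_mono (φ : ℕ → ℕ) {B B' : Board} (h : B ≤ B') : B.comap φ ≤ B'.comap φ :=
  ⟨Set.preimage_mono h.1, Set.preimage_mono h.2⟩

lemma ExtendsTo.comap {B B' : Board} (h : B.ExtendsTo B') (φ : ℕ → ℕ) :
    (B.comap φ).ExtendsTo (B'.comap φ) :=
  ⟨comap_mono φ h.1, fun _ he => h.2 _ he⟩

end Board

section Play

variable (b : BuilderStrat) (p : PainterStrat) (init : Board)

lemma colored_playGame_succ (t : ℕ) :
    (playGame b p init (t + 1)).colored =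
      insert (b (playGame b p init t)) (playGame b p init t).colored := by
  simp only [playGame]
  split <;> simp [Board.colored, Set.insert_union, Set.union_insert]

lemma playGame_monotone : Monotone (playGame b p init) := by
  refine monotone_nat_of_le_succ fun t => ?_
  simp only [playGame]
  split
  · exact ⟨Set.subset_insert _ _, le_rfl⟩
  · exact ⟨le_rfl, Set.subset_insert _ _⟩

variable {b p init}

lemma move_mem_colored_of_lt {u t : ℕ} (h : u < t) :
    b (playGame b p init u) ∈ (playGame b p init t).colored :=
  Board.colored_mono (playGame_monotone b p init h)
    (by rw [colored_playGame_succ]; exact Set.mem_insert _ _)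

lemma extendsTo_playGame_succ {t : ℕ}
    (hfresh : b (playGame b p init t) ∉ (playGame b p init t).colored) :
    (playGame b p init t).ExtendsTo (playGame b p init (t + 1)) := by
  refine ⟨playGame_monotone b p init t.le_succ, fun e he hred => ?_⟩
  have hne : e ≠ b (playGame b p init t) := fun h => hfresh (h ▸ he)
  simp only [playGame] at hred
  split at hred
  · exact (Set.mem_insert_iff.1 hred).resolve_left hne
  · exact hred

lemma move_mem_fst_iff {u t : ℕ}
    (hfresh : ∀ s < t, b (playGame b p init s) ∉ (playGame b p init s).colored) (hu : u < t) :
    b (playGame b p init u) ∈ (playGame b p init t).1 ↔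
      p (playGame b p init u) (b (playGame b p init u)) = true := by
  induction t, Nat.succ_le_of_lt hu using Nat.le_induction with
  | base =>
    simp only [playGame]
    split
    · simp_all
    · simp_all [Board.colored]
  | succ t ht ih =>
    have hext := extendsTo_playGame_succ (hfresh t (by omega))
    rw [← ih (fun s hs => hfresh s (by omega)) (by omega)]
    exact ⟨hext.2 _ (move_mem_colored_of_lt (by omega)), fun h => hext.1.1 h⟩

lemma colored_playGame_subset (t : ℕ) :
    (playGame b p init t).colored ⊆
      init.colored ∪ (Finset.range t).image fun u => b (playGame b p init u) := by
  induction t with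
  | zero => exact Set.subset_union_left
  | succ t ih =>
    rw [colored_playGame_succ]
    refine Set.insert_subset
      (Or.inr (Finset.mem_coe.2 (Finset.mem_image_of_mem _ (Finset.self_mem_range_succ t))))
      (ih.trans (Set.union_subset_union_right _ ?_))
    exact_mod_cast Finset.image_subset_image (Finset.range_subset_range.2 t.le_succ)

lemma playGame_congr_painter {q : PainterStrat} {n : ℕ}
    (h : ∀ s < n, q (playGame b p init s) (b (playGame b p init s)) =
      p (playGame b p init s) (b (playGame b p init s))) :
    playGame b q init n = playGame b p init n := by
  induction n with
  | zero => rfl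
  | succ n ih =>
    simp only [playGame, ih fun s hs => h s (by omega), h n n.lt_succ_self]

lemma playGame_congr_builder {b' : BuilderStrat} {n : ℕ}
    (h : ∀ s < n, b (playGame b p init s) = b' (playGame b' p init s)) :
    playGame b p init n = playGame b' p init n := by
  induction n with
  | zero => rfl
  | succ n ih =>
    have hn := h n n.lt_succ_self
    simp only [playGame]
    rw [hn, ih fun s hs => h s (by omega)]

end Play

section Fresh

variable {b : BuilderStrat} {init : Board}

lemma ValidFrom.injective_moves (hv : ValidFrom b init) (p : PainterStrat) :
    Function.Injective fun t => b (playGame b p init t) := by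
  have key : ∀ u v, u < v → b (playGame b p init u) ≠ b (playGame b p init v) :=
    fun u v huv h => (hv p v).2 (h ▸ move_mem_colored_of_lt huv)
  intro u v h
  rcases lt_trichotomy u v with huv | rfl | hvu
  · exact absurd h (key u v huv)
  · rfl
  · exact absurd h.symm (key v u hvu)

lemma ValidFrom.infinite_fresh (hv : ValidFrom b init) :
    {e : Sym2 ℕ | ¬ e.IsDiag ∧ e ∉ init.colored}.Infinite :=
  Set.infinite_of_injective_forall_mem (hv.injective_moves fun _ _ => true) fun t =>
    ⟨(hv _ t).1, fun h => (hv _ t).2 (Board.colored_mono (playGame_monotone _ _ _ t.zero_le) h)⟩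

/-- An uncoloured non-loop edge of `B` (a junk value if there is none). -/
def fallback (B : Board) : Sym2 ℕ :=
  Classical.epsilon fun e => ¬ e.IsDiag ∧ e ∉ B.colored

/-- Finitely many rounds colour finitely many edges, while a valid strategy from `init`
exhibits infinitely many uncoloured non-loop edges on `init`. -/
lemma ValidFrom.fallback_playGame (hv : ValidFrom b init) (b' : BuilderStrat)
    (p : PainterStrat) (t : ℕ) :
    ¬ (fallback (playGame b' p init t)).IsDiag ∧
      fallback (playGame b' p init t) ∉ (playGame b' p init t).colored := by
  obtain ⟨e, ⟨hdiag, hinit⟩, hmoves⟩ :=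
    hv.infinite_fresh.exists_notMem_finset
      ((Finset.range t).image fun u => b' (playGame b' p init u))
  exact Classical.epsilon_spec (p := fun e => ¬ e.IsDiag ∧ e ∉ (playGame b' p init t).colored)
    ⟨e, hdiag, fun h => (colored_playGame_subset t h).elim hinit hmoves⟩

end Fresh

section Replay

def redPainter (B : Board) : PainterStrat := fun _ e => decide (e ∈ B.1)

def replay (b : BuilderStrat) (init B : Board) : ℕ → Board :=
  playGame b (redPainter B) init

def ReplayColored (b : BuilderStrat) (init B : Board) (n : ℕ) : Prop :=
  ∀ u < n, b (replay b init B u) ∈ B.colored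

variable {b : BuilderStrat} {init B B' : Board} {m n : ℕ}

lemma replay_eq_playGame {p : PainterStrat}
    (h : ∀ u < n, b (playGame b p init u) ∈ B.1 ↔
      p (playGame b p init u) (b (playGame b p init u)) = true) :
    replay b init B n = playGame b p init n :=
  playGame_congr_painter fun u hu => by simp only [redPainter, h u hu, Bool.decide_eq_true]

lemma ReplayColored.mono (h : ReplayColored b init B n) (hmn : m ≤ n) :
    ReplayColored b init B m :=
  fun u hu => h u (hu.trans_le hmn)

lemma replay_le (hinit : init ≤ B) (h : ReplayColored b init B n) : replay b init B n ≤ B := by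
  induction n with
  | zero => exact hinit
  | succ n ih =>
    have hn := h n n.lt_succ_self
    have ih := ih (h.mono n.le_succ)
    simp only [replay, playGame] at ih hn ⊢
    by_cases hred : b (playGame b (redPainter B) init n) ∈ B.1
    · rw [if_pos (show redPainter B _ _ = true from decide_eq_true hred)]
      exact ⟨Set.insert_subset hred ih.1, ih.2⟩
    · rw [if_neg (show ¬ redPainter B _ _ = true from fun h' => hred (of_decide_eq_true h'))]
      exact ⟨ih.1, Set.insert_subset (hn.resolve_left hred) ih.2⟩

lemma replay_eq_of_extendsTo (hB : B.ExtendsTo B') (h : ReplayColored b init B n) :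
    replay b init B' n = replay b init B n :=
  playGame_congr_painter fun u hu => by
    simp only [redPainter, decide_eq_decide]
    exact ⟨hB.2 _ (h u hu), fun h' => hB.1.1 h'⟩

lemma ReplayColored.of_extendsTo (hB : B.ExtendsTo B') (h : ReplayColored b init B n) :
    ReplayColored b init B' n := fun u hu => by
  rw [replay_eq_of_extendsTo hB (h.mono hu.le)]
  exact Board.colored_mono hB.1 (h u hu)

end Replay

section Embedding

def MonotoneUnderEmbedding (W : Board → Prop) : Prop :=
  ∀ (φ : ℕ ↪ ℕ) (B B' : Board), B ≤ B'.comap φ → W B → W B'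

lemma HasCopy.fromEdgeSet_of_subset_preimage {α : Type} {K : SimpleGraph α}
    {S S' : Set (Sym2 ℕ)} (φ : ℕ ↪ ℕ) (hS : S ⊆ Sym2.map φ ⁻¹' S')
    (h : HasCopy K (fromEdgeSet S)) : HasCopy K (fromEdgeSet S') := by
  obtain ⟨f, hf⟩ := h
  refine ⟨f.trans φ, fun x y hxy => ?_⟩
  obtain ⟨hmem, hne⟩ := (fromEdgeSet_adj _).1 (hf x y hxy)
  exact (fromEdgeSet_adj _).2 ⟨hS hmem, φ.injective.ne hne⟩

lemma monotoneUnderEmbedding_redCopy_or_blueCopy {α β : Type} (G : SimpleGraph α)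
    (H : SimpleGraph β) : MonotoneUnderEmbedding fun B => RedCopy G B ∨ BlueCopy H B :=
  fun φ _ _ hB => Or.imp (HasCopy.fromEdgeSet_of_subset_preimage φ hB.1)
    (HasCopy.fromEdgeSet_of_subset_preimage φ hB.2)

/-- Values beyond `m` are sent past the maximum of `f`, which keeps the extension injective. -/
lemma Fin.exists_embedding_nat_extend {m : ℕ} (f : Fin m ↪ ℕ) :
    ∃ φ : ℕ ↪ ℕ, ∀ i : Fin m, φ i = f i := by
  set N := Finset.univ.sup fun i => f i
  have hf : ∀ i, f i ≤ N := fun i => Finset.le_sup (f := fun i => f i) (Finset.mem_univ i)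
  refine ⟨⟨fun n => if h : n < m then f ⟨n, h⟩ else N + 1 + n, fun x y hxy => ?_⟩,
    fun i => dif_pos i.isLt⟩
  simp only at hxy
  split_ifs at hxy with hx hy hy
  · simpa using f.injective hxy
  · linarith [hf ⟨x, hx⟩]
  · linarith [hf ⟨y, hy⟩]
  · omega

lemma BlueCopy.exists_le_comap {m : ℕ} {F : SimpleGraph (Fin m)} {B : Board}
    (h : BlueCopy F B) : ∃ φ : ℕ ↪ ℕ, blueGraphBoard F ≤ B.comap φ := by
  obtain ⟨f, hf⟩ := h
  obtain ⟨φ, hφ⟩ := Fin.exists_embedding_nat_extend f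
  refine ⟨φ, ⟨Set.empty_subset _, ?_⟩⟩
  rintro _ ⟨i, j, hij, rfl⟩
  show Sym2.map φ s(i, j) ∈ B.2
  rw [Sym2.map_mk, hφ, hφ]
  exact ((fromEdgeSet_adj _).1 (hf i j hij)).1

end Embedding

section Simulation

/-- Moves of `b₂` whose images under `φ` are already coloured cost no round: Painter's answer
to them is read off the board. -/
def simulate (b₂ : BuilderStrat) (C₂ : Board) (φ : ℕ ↪ ℕ) (B : Board) : Sym2 ℕ :=
  if h : ∃ u, b₂ (replay b₂ C₂ (B.comap φ) u) ∉ (B.comap φ).colored then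
    (b₂ (replay b₂ C₂ (B.comap φ) (Nat.find h))).map φ
  else fallback B

variable {b b₂ : BuilderStrat} {p : PainterStrat} {C C₂ : Board} {φ : ℕ ↪ ℕ} {t t₀ j : ℕ}

lemma simulate_valid {b₀ : BuilderStrat} (hv₂ : ValidFrom b₂ C₂) (hv : ValidFrom b₀ C) :
    ¬ (simulate b₂ C₂ φ (playGame b p C t)).IsDiag ∧
      simulate b₂ C₂ φ (playGame b p C t) ∉ (playGame b p C t).colored := by
  unfold simulate
  split
  case isTrue h => exact ⟨(Sym2.isDiag_map φ.injective).not.2 (hv₂ _ _).1, Nat.find_spec h⟩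
  case isFalse => exact hv.fallback_playGame b p t

lemma ReplayColored.simulate_succ
    (hfresh : b (playGame b p C t) ∉ (playGame b p C t).colored)
    (hsim : b (playGame b p C t) = simulate b₂ C₂ φ (playGame b p C t))
    (h : ReplayColored b₂ C₂ ((playGame b p C t).comap φ) j) :
    ReplayColored b₂ C₂ ((playGame b p C (t + 1)).comap φ) (j + 1) := by
  have hext := (extendsTo_playGame_succ hfresh).comap φ
  by_cases hnew : ∃ u, b₂ (replay b₂ C₂ ((playGame b p C t).comap φ) u) ∉
      ((playGame b p C t).comap φ).colored
  · have hk : ReplayColored b₂ C₂ ((playGame b p C t).comap φ) (Nat.find hnew) :=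
      fun u hu => not_not.1 (Nat.find_min hnew hu)
    have hjk : j ≤ Nat.find hnew := (Nat.le_find_iff _ _).2 fun u hu => not_not.2 (h u hu)
    refine ReplayColored.mono (n := Nat.find hnew + 1) (fun u hu => ?_) (by omega)
    rcases Nat.lt_succ_iff_lt_or_eq.1 hu with hu | rfl
    · exact hk.of_extendsTo hext u hu
    · rw [replay_eq_of_extendsTo hext hk]
      show Sym2.map φ _ ∈ (playGame b p C (t + 1)).colored
      rw [colored_playGame_succ, hsim, simulate, dif_pos hnew]
      exact Set.mem_insert _ _
  · simp only [not_exists, not_not] at hnew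
    exact ReplayColored.of_extendsTo hext fun u _ => hnew u

lemma replayColored_of_simulate (hfresh : ∀ t, b (playGame b p C t) ∉ (playGame b p C t).colored)
    (hsim : ∀ t, t₀ ≤ t → b (playGame b p C t) = simulate b₂ C₂ φ (playGame b p C t)) :
    ∀ j, ReplayColored b₂ C₂ ((playGame b p C (t₀ + j)).comap φ) j
  | 0 => fun _ hu => absurd hu (Nat.not_lt_zero _)
  | j + 1 =>
    (replayColored_of_simulate hfresh hsim j).simulate_succ (hfresh _) (hsim _ (Nat.le_add_right _ _))

/-- Every move of `b₂` in the transported game is coloured after `t₂` rounds, so the board of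
`b₂`'s game embeds into the real board. -/
lemma MonotoneUnderEmbedding.of_simulate {W : Board → Prop} {t₂ : ℕ}
    (hW : MonotoneUnderEmbedding W) (hw₂ : ∀ q, ∃ u ≤ t₂, W (playGame b₂ q C₂ u))
    (hC₂ : C₂ ≤ (playGame b p C t₀).comap φ)
    (hfresh : ∀ t, b (playGame b p C t) ∉ (playGame b p C t).colored)
    (hsim : ∀ t, t₀ ≤ t → b (playGame b p C t) = simulate b₂ C₂ φ (playGame b p C t)) :
    W (playGame b p C (t₀ + t₂)) := by
  obtain ⟨u, hu, hWu⟩ := hw₂ (redPainter ((playGame b p C (t₀ + t₂)).comap φ))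
  have hinit : C₂ ≤ (playGame b p C (t₀ + t₂)).comap φ :=
    hC₂.trans (Board.comap_mono φ (playGame_monotone b p C (Nat.le_add_right t₀ t₂)))
  exact hW φ _ _ (replay_le hinit ((replayColored_of_simulate hfresh hsim t₂).mono hu)) hWu

end Simulation

section Composition

def composeStep (b₁ b₂ : BuilderStrat) (C₂ : Board) (W₁ : Board → Prop) (P B : Board) :
    Sym2 ℕ :=
  if W₁ P then
    if hφ : ∃ φ : ℕ ↪ ℕ, C₂ ≤ P.comap φ then simulate b₂ C₂ hφ.choose B else fallback B
  else b₁ P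

/-- Builder strategies only see the board, so the current position of `b₁`'s game is
recovered by replaying `b₁` against the colours of the board, up to the first position where
`W₁` holds or `b₁` asks for an uncoloured edge. -/
def composeStrat (b₁ b₂ : BuilderStrat) (C C₂ : Board) (W₁ : Board → Prop) (B : Board) :
    Sym2 ℕ :=
  if h : ∃ s, W₁ (replay b₁ C B s) ∨ b₁ (replay b₁ C B s) ∉ B.colored then
    composeStep b₁ b₂ C₂ W₁ (replay b₁ C B (Nat.find h)) B
  else fallback B

variable {b b₁ b₂ : BuilderStrat} {p : PainterStrat} {C C₂ B : Board} {W₁ : Board → Prop}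
  {T : ℕ}

lemma composeStrat_eq {n : ℕ}
    (hlt : ∀ u < n, ¬ W₁ (replay b₁ C B u) ∧ b₁ (replay b₁ C B u) ∈ B.colored)
    (hn : W₁ (replay b₁ C B n) ∨ b₁ (replay b₁ C B n) ∉ B.colored) :
    composeStrat b₁ b₂ C C₂ W₁ B = composeStep b₁ b₂ C₂ W₁ (replay b₁ C B n) B := by
  have h : ∃ s, W₁ (replay b₁ C B s) ∨ b₁ (replay b₁ C B s) ∉ B.colored := ⟨n, hn⟩
  have hfind : Nat.find h = n :=
    (Nat.find_eq_iff h).2 ⟨hn, fun u hu => not_or.2 ⟨(hlt u hu).1, not_not.2 (hlt u hu).2⟩⟩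
  rw [composeStrat, dif_pos h, hfind]

lemma replay_eq_of_follows {n t : ℕ}
    (hfollow : ∀ s < n, b (playGame b p C s) = b₁ (playGame b₁ p C s)) (hnt : n ≤ t)
    (hfresh : ∀ s < t, b (playGame b p C s) ∉ (playGame b p C s).colored) :
    replay b₁ C (playGame b p C t) n = playGame b₁ p C n := by
  refine replay_eq_playGame fun u hu => ?_
  rw [← hfollow u hu, ← playGame_congr_builder fun s hs => hfollow s (hs.trans hu)]
  exact move_mem_fst_iff hfresh (hu.trans_le hnt)

lemma composeStrat_play_eq_of_lt (hv₁ : ValidFrom b₁ C)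
    (hTmin : ∀ s < T, ¬ W₁ (playGame b₁ p C s)) :
    ∀ t < T, composeStrat b₁ b₂ C C₂ W₁ (playGame (composeStrat b₁ b₂ C C₂ W₁) p C t) =
      b₁ (playGame b₁ p C t) := by
  intro t
  induction t using Nat.strong_induction_on with
  | _ t ih =>
  intro htT
  have hfollow := fun s (hs : s < t) => ih s hs (hs.trans htT)
  have hplay : ∀ s ≤ t, playGame (composeStrat b₁ b₂ C C₂ W₁) p C s = playGame b₁ p C s :=
    fun s hs => playGame_congr_builder fun u hu => hfollow u (hu.trans_le hs)
  have hfresh : ∀ s < t, composeStrat b₁ b₂ C C₂ W₁ (playGame (composeStrat b₁ b₂ C C₂ W₁) p C s)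
      ∉ (playGame (composeStrat b₁ b₂ C C₂ W₁) p C s).colored := fun s hs => by
    rw [hfollow s hs, hplay s hs.le]
    exact (hv₁ p s).2
  have hreplay : ∀ u ≤ t,
      replay b₁ C (playGame (composeStrat b₁ b₂ C C₂ W₁) p C t) u = playGame b₁ p C u :=
    fun u hu => replay_eq_of_follows (fun s hs => hfollow s (hs.trans_le hu)) hu hfresh
  rw [composeStrat_eq (n := t) (fun u hu => ?_) ?_, hreplay t le_rfl, composeStep,
    if_neg (hTmin t htT)]
  · rw [hreplay t le_rfl, hplay t le_rfl]
    exact Or.inr (hv₁ p t).2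
  · rw [hreplay u hu.le, hplay t le_rfl]
    exact ⟨hTmin u (hu.trans htT), move_mem_colored_of_lt hu⟩

lemma composeStrat_play_eq_of_le (hv₁ : ValidFrom b₁ C) (hT : W₁ (playGame b₁ p C T))
    (hTmin : ∀ s < T, ¬ W₁ (playGame b₁ p C s)) {t : ℕ} (hTt : T ≤ t)
    (hfresh : ∀ s < t, composeStrat b₁ b₂ C C₂ W₁ (playGame (composeStrat b₁ b₂ C C₂ W₁) p C s)
      ∉ (playGame (composeStrat b₁ b₂ C C₂ W₁) p C s).colored) :
    composeStrat b₁ b₂ C C₂ W₁ (playGame (composeStrat b₁ b₂ C C₂ W₁) p C t) =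
      composeStep b₁ b₂ C₂ W₁ (playGame b₁ p C T)
        (playGame (composeStrat b₁ b₂ C C₂ W₁) p C t) := by
  have hfollow := composeStrat_play_eq_of_lt (b₂ := b₂) (C₂ := C₂) hv₁ hTmin
  have hreplay : ∀ u ≤ T,
      replay b₁ C (playGame (composeStrat b₁ b₂ C C₂ W₁) p C t) u = playGame b₁ p C u :=
    fun u hu => replay_eq_of_follows (fun s hs => hfollow s (hs.trans_le hu)) (hu.trans hTt) hfresh
  rw [composeStrat_eq (n := T) (fun u hu => ?_) ?_, hreplay T le_rfl]
  · rw [hreplay T le_rfl]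
    exact Or.inl hT
  · rw [hreplay u hu.le, ← hfollow u hu]
    exact ⟨hTmin u hu, move_mem_colored_of_lt (hu.trans_le hTt)⟩

lemma composeStrat_play_valid (hv₁ : ValidFrom b₁ C) (hv₂ : ValidFrom b₂ C₂)
    (hT : W₁ (playGame b₁ p C T)) (hTmin : ∀ s < T, ¬ W₁ (playGame b₁ p C s)) (t : ℕ) :
    ¬ (composeStrat b₁ b₂ C C₂ W₁ (playGame (composeStrat b₁ b₂ C C₂ W₁) p C t)).IsDiag ∧
      composeStrat b₁ b₂ C C₂ W₁ (playGame (composeStrat b₁ b₂ C C₂ W₁) p C t)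
        ∉ (playGame (composeStrat b₁ b₂ C C₂ W₁) p C t).colored := by
  induction t using Nat.strong_induction_on with
  | _ t ih =>
  rcases lt_or_ge t T with htT | hTt
  · rw [composeStrat_play_eq_of_lt hv₁ hTmin t htT, playGame_congr_builder fun s hs =>
      composeStrat_play_eq_of_lt hv₁ hTmin s (hs.trans htT)]
    exact hv₁ p t
  · rw [composeStrat_play_eq_of_le hv₁ hT hTmin hTt fun s hs => (ih s hs).2, composeStep,
      if_pos hT]
    split
    · exact simulate_valid hv₂ hv₁
    · exact hv₁.fallback_playGame _ p t

lemma composeStrat_wins {W : Board → Prop} {t₂ : ℕ} (hW : MonotoneUnderEmbedding W)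
    (hW₁ : ∀ B, W₁ B → W B ∨ ∃ φ : ℕ ↪ ℕ, C₂ ≤ B.comap φ)
    (hv₁ : ValidFrom b₁ C) (hv₂ : ValidFrom b₂ C₂)
    (hw₂ : ∀ q, ∃ u ≤ t₂, W (playGame b₂ q C₂ u))
    (hT : W₁ (playGame b₁ p C T)) (hTmin : ∀ s < T, ¬ W₁ (playGame b₁ p C s)) :
    ∃ s ≤ T + t₂, W (playGame (composeStrat b₁ b₂ C C₂ W₁) p C s) := by
  have hRT := playGame_congr_builder fun s hs =>
    composeStrat_play_eq_of_lt (b₂ := b₂) (C₂ := C₂) hv₁ hTmin s hs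
  by_cases hφ : ∃ φ : ℕ ↪ ℕ, C₂ ≤ (playGame b₁ p C T).comap φ
  · have hfresh := fun t => (composeStrat_play_valid hv₁ hv₂ hT hTmin t).2
    refine ⟨T + t₂, le_rfl, hW.of_simulate (φ := hφ.choose) hw₂ (by rw [hRT]; exact hφ.choose_spec)
      hfresh fun t hTt => ?_⟩
    rw [composeStrat_play_eq_of_le hv₁ hT hTmin hTt fun s _ => hfresh s, composeStep, if_pos hT,
      dif_pos hφ]
  · refine ⟨T, Nat.le_add_right _ _, ?_⟩
    rw [hRT]
    exact (hW₁ _ hT).resolve_right hφ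

end Composition

theorem BuilderWinsIn.compose {C C₂ : Board} {W W₁ : Board → Prop} {t₁ t₂ : ℕ}
    (hW : MonotoneUnderEmbedding W) (hW₁ : ∀ B, W₁ B → W B ∨ ∃ φ : ℕ ↪ ℕ, C₂ ≤ B.comap φ)
    (h₁ : BuilderWinsIn C W₁ t₁) (h₂ : BuilderWinsIn C₂ W t₂) : BuilderWinsIn C W (t₁ + t₂) := by
  obtain ⟨b₁, hv₁, hw₁⟩ := h₁
  obtain ⟨b₂, hv₂, hw₂⟩ := h₂
  have hT := fun p => (hw₁ p).imp fun _ h => h.2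
  refine ⟨composeStrat b₁ b₂ C C₂ W₁,
    fun p => composeStrat_play_valid hv₁ hv₂ (Nat.find_spec (hT p)) fun _ => Nat.find_min (hT p),
    fun p => ?_⟩
  obtain ⟨s, hs, hWs⟩ :=
    composeStrat_wins hW hW₁ hv₁ hv₂ hw₂ (Nat.find_spec (hT p)) fun _ => Nat.find_min (hT p)
  obtain ⟨u, hu, hWu⟩ := hw₁ p
  exact ⟨s, hs.trans (Nat.add_le_add_right ((Nat.find_min' _ hWu).trans hu) _), hWs⟩

section OnlineRamseyNumber

variable {init C₁ C₂ : Board} {W W₁ W₂ : Board → Prop}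

lemma exists_builderWinsIn_of_rtilde_ne_top (h : rtilde init W ≠ ⊤) :
    ∃ t : ℕ, BuilderWinsIn init W t ∧ rtilde init W = t := by
  have hne : {m : ℕ∞ | ∃ t : ℕ, BuilderWinsIn init W t ∧ m = t}.Nonempty := by
    by_contra hempty
    exact h (by rw [rtilde, Set.not_nonempty_iff_eq_empty.1 hempty, sInf_empty])
  obtain ⟨t, ht, he⟩ := csInf_mem hne
  exact ⟨t, ht, he⟩

lemma rtilde_le_add_of_builderWinsIn
    (h : ∀ t₁ t₂, BuilderWinsIn C₁ W₁ t₁ → BuilderWinsIn C₂ W₂ t₂ →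
      BuilderWinsIn init W (t₁ + t₂)) :
    rtilde init W ≤ rtilde C₁ W₁ + rtilde C₂ W₂ := by
  rcases eq_or_ne (rtilde C₁ W₁) ⊤ with h₁ | h₁
  · simp [h₁]
  rcases eq_or_ne (rtilde C₂ W₂) ⊤ with h₂ | h₂
  · simp [h₂]
  obtain ⟨t₁, hw₁, he₁⟩ := exists_builderWinsIn_of_rtilde_ne_top h₁
  obtain ⟨t₂, hw₂, he₂⟩ := exists_builderWinsIn_of_rtilde_ne_top h₂
  rw [he₁, he₂, ← Nat.cast_add]
  exact sInf_le ⟨_, h t₁ t₂ hw₁ hw₂, rfl⟩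

end OnlineRamseyNumber

end

/-- Triangle inequality for online Ramsey games:
`r̃_C(G,H) ≤ r̃_C(G,F) + r̃_{F_b}(G,H)`, and in particular the case of the empty board. -/
theorem online_ramsey_triangle_inequality {g h f : ℕ}
    (G : SimpleGraph (Fin g)) (H : SimpleGraph (Fin h)) (F : SimpleGraph (Fin f))
    (C : Board) :
    rtilde C (fun B => RedCopy G B ∨ BlueCopy H B) ≤
      rtilde C (fun B => RedCopy G B ∨ BlueCopy F B) +
        rtilde (blueGraphBoard F) (fun B => RedCopy G B ∨ BlueCopy H B) ∧
    rtilde emptyBoard (fun B => RedCopy G B ∨ BlueCopy H B) ≤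
      rtilde emptyBoard (fun B => RedCopy G B ∨ BlueCopy F B) +
        rtilde (blueGraphBoard F) (fun B => RedCopy G B ∨ BlueCopy H B) := by
  have key : ∀ C' : Board, rtilde C' (fun B => RedCopy G B ∨ BlueCopy H B) ≤
      rtilde C' (fun B => RedCopy G B ∨ BlueCopy F B) +
        rtilde (blueGraphBoard F) (fun B => RedCopy G B ∨ BlueCopy H B) := fun _ =>
    rtilde_le_add_of_builderWinsIn fun _ _ h₁ h₂ =>
      h₁.compose (monotoneUnderEmbedding_redCopy_or_blueCopy G H)
        (fun _ hB => hB.elim (fun hG => Or.inl (Or.inl hG)) fun hF => Or.inr hF.exists_le_comap) h₂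
  exact ⟨key C, key emptyBoard⟩
end

section
/- For every k ≥ 1, in every online Ramsey game Builder can force, within 2k − 1 rounds, the existence of two vertex-disjoint monochromatic paths, one red and one blue, whose lengths (numbers of edges) sum to k. -/
/-!
Builder keeps a red path starting at `x` and a disjoint blue path starting at `y`, with `xy`
unselected. He selects `xy`; say it is red, so that the red path may now start at `y`. He then
selects `yN` for a fresh vertex `N`: if it is red, the red path grows by `N, y` while the blue path
gives up its first vertex `y`; if it is blue, the blue path grows by `N` and the red one is left
as it was. Either way the total length grows by one every two rounds, and a blue `xy` is the same
with the colours exchanged. The first round, on a fresh edge, already yields a path of length one,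
whence `2k - 1` rounds.
-/

open SimpleGraph

/-- The board contains two vertex-disjoint monochromatic paths, a red one and a blue
one, whose lengths (numbers of edges) sum to `k`. -/
def TwoDisjointPaths (k : ℕ) (B : Board) : Prop :=
  ∃ a c : ℕ, a + c = k ∧
    ∃ (f : Fin (a + 1) ↪ ℕ) (g : Fin (c + 1) ↪ ℕ),
      (∀ x y, (SimpleGraph.pathGraph (a + 1)).Adj x y →
        (SimpleGraph.fromEdgeSet B.1).Adj (f x) (f y)) ∧
      (∀ x y, (SimpleGraph.pathGraph (c + 1)).Adj x y →
        (SimpleGraph.fromEdgeSet B.2).Adj (g x) (g y)) ∧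
      (∀ x y, f x ≠ g y)

theorem Sym2.le_sup_of_mem {α : Type*} [SemilatticeSup α] {a : α} {z : Sym2 α} (h : a ∈ z) :
    a ≤ z.sup := by
  induction z using Sym2.ind with
  | _ x y => rcases Sym2.mem_iff.1 h with rfl | rfl <;> simp

namespace Board

def swap (B : Board) : Board := (B.2, B.1)

def paint (B : Board) : Bool → Sym2 ℕ → Board
  | true, e => (insert e B.1, B.2)
  | false, e => (B.1, insert e B.2)

def IsAvailable (B : Board) (e : Sym2 ℕ) : Prop := ¬ e.IsDiag ∧ e ∉ B.colored

def VerticesBelow (B : Board) (N : ℕ) : Prop := ∀ e ∈ B.colored, ∀ v ∈ e, v < N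

variable {B : Board} {N : ℕ}

@[simp] theorem colored_paint (B : Board) (c : Bool) (e : Sym2 ℕ) :
    (B.paint c e).colored = insert e B.colored := by
  cases c <;> simp [paint, colored, Set.insert_union, Set.union_insert]

@[simp] theorem colored_swap (B : Board) : B.swap.colored = B.colored := Set.union_comm _ _

theorem swap_paint (B : Board) (c : Bool) (e : Sym2 ℕ) :
    (B.paint c e).swap = B.swap.paint (!c) e := by
  cases c <;> rfl

theorem exists_verticesBelow (h : B.colored.Finite) : ∃ N, B.VerticesBelow N := by
  obtain ⟨M, hM⟩ := (h.image Sym2.sup).bddAbove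
  exact ⟨M + 1, fun e he v hv =>
    Nat.lt_succ_of_le ((Sym2.le_sup_of_mem hv).trans (hM ⟨e, he, rfl⟩))⟩

theorem VerticesBelow.swap (h : B.VerticesBelow N) : B.swap.VerticesBelow N := by
  simpa [VerticesBelow] using h

theorem VerticesBelow.not_mem_colored (h : B.VerticesBelow N) {e : Sym2 ℕ} {v : ℕ}
    (hv : v ∈ e) (hN : N ≤ v) : e ∉ B.colored :=
  fun he => (h e he v hv).not_ge hN

theorem VerticesBelow.paint (h : B.VerticesBelow N) {N' v w : ℕ} (hN : N ≤ N') (hv : v < N')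
    (hw : w < N') (c : Bool) : (B.paint c s(v, w)).VerticesBelow N' := by
  intro e he a ha
  rw [colored_paint] at he
  rcases Set.mem_insert_iff.1 he with rfl | he
  · rcases Sym2.mem_iff.1 ha with rfl | rfl <;> assumption
  · exact (h e he a ha).trans_le hN

theorem exists_isAvailable (h : B.colored.Finite) : ∃ e, B.IsAvailable e := by
  obtain ⟨N, hN⟩ := exists_verticesBelow h
  exact ⟨s(N, N + 1), by simp, hN.not_mem_colored (Sym2.mem_mk_left _ _) le_rfl⟩

end Board

section Game

variable {b : BuilderStrat} {p : PainterStrat} {B : Board}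

theorem playGame_succ' (t : ℕ) :
    playGame b p B (t + 1) = playGame b p (B.paint (p B (b B)) (b B)) t := by
  induction t with
  | zero => cases h : p B (b B) <;> simp only [playGame, h] <;> rfl
  | succ t ih => rw [playGame, ih]; rfl

theorem finite_colored_playGame (h : B.colored.Finite) (t : ℕ) :
    (playGame b p B t).colored.Finite := by
  induction t generalizing B with
  | zero => exact h
  | succ t ih => rw [playGame_succ']; exact ih (by simpa using h.insert (b B))

end Game

inductive ForcesIn (W : Board → Prop) : ℕ → Board → Prop
  | win {m : ℕ} {B : Board} : W B → ForcesIn W m B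
  | move {m : ℕ} {B : Board} (e : Sym2 ℕ) : B.IsAvailable e →
      (∀ c, ForcesIn W m (B.paint c e)) → ForcesIn W (m + 1) B

namespace ForcesIn

variable {W W' : Board → Prop} {m m' : ℕ} {B : Board}

theorem mono (h : ForcesIn W m B) (hm : m ≤ m') (hW : ∀ B, W B → W' B) : ForcesIn W' m' B := by
  induction h generalizing m' with
  | win hB => exact win (hW _ hB)
  | move e he _ ih =>
    cases m' with
    | zero => omega
    | succ m' => exact move e he fun c => ih c (by omega)

theorem bind (h : ForcesIn W m B) (h' : ∀ B, W B → ForcesIn W' m' B) :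
    ForcesIn W' (m + m') B := by
  induction h with
  | win hB => exact (h' _ hB).mono (Nat.le_add_left _ _) fun _ => id
  | move e he _ ih => rw [Nat.add_right_comm]; exact move e he ih

theorem swap (h : ForcesIn W m B) (hW : ∀ B, W B → W B.swap) : ForcesIn W m B.swap := by
  induction h with
  | win hB => exact win (hW _ hB)
  | @move m B e he _ ih =>
    refine move e (by simpa [Board.IsAvailable] using he) fun c => ?_
    simpa [Board.swap_paint] using ih (!c)

end ForcesIn

open scoped Classical in
noncomputable def forcingStrategy (W : Board → Prop) : BuilderStrat := fun B =>
  if h : ∃ m e, B.IsAvailable e ∧ ∀ c, ForcesIn W m (B.paint c e) then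
    (Nat.find_spec h).choose
  else Classical.epsilon B.IsAvailable

section Strategy

variable {W : Board → Prop} {m : ℕ} {B : Board}

theorem isAvailable_forcingStrategy (hB : B.colored.Finite) :
    B.IsAvailable (forcingStrategy W B) := by
  classical
  unfold forcingStrategy
  split_ifs with h
  · exact (Nat.find_spec h).choose_spec.1
  · exact Classical.epsilon_spec (Board.exists_isAvailable hB)

theorem ForcesIn.exists_playGame_forcingStrategy (h : ForcesIn W m B) (p : PainterStrat) :
    ∃ s ≤ m, W (playGame (forcingStrategy W) p B s) := by
  classical
  induction m generalizing B with
  | zero => cases h with | win hB => exact ⟨0, le_rfl, hB⟩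
  | succ m ih =>
    cases h with
    | win hB => exact ⟨0, Nat.zero_le _, hB⟩
    | move e he hc =>
      have hex : ∃ m e, B.IsAvailable e ∧ ∀ c, ForcesIn W m (B.paint c e) := ⟨m, e, he, hc⟩
      have hchild : ∀ c, ForcesIn W m (B.paint c (forcingStrategy W B)) := by
        rw [forcingStrategy, dif_pos hex]
        exact fun c => ((Nat.find_spec hex).choose_spec.2 c).mono
          (Nat.find_min' hex ⟨e, he, hc⟩) fun _ => id
      obtain ⟨s, hs, hW⟩ := ih (hchild (p B (forcingStrategy W B)))
      exact ⟨s + 1, by omega, by rwa [playGame_succ']⟩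

theorem ForcesIn.builderWinsIn (h : ForcesIn W m B) (hB : B.colored.Finite) :
    BuilderWinsIn B W m :=
  ⟨forcingStrategy W, fun _ t => isAvailable_forcingStrategy (finite_colored_playGame hB t),
    h.exists_playGame_forcingStrategy⟩

end Strategy

theorem List.IsChain.exists_pathGraph_embedding {α : Type*} {G : SimpleGraph α} {l : List α}
    (hc : l.IsChain G.Adj) (hl : l.Nodup) {a : ℕ} (ha : a < l.length) :
    ∃ f : Fin (a + 1) ↪ α, (∀ i, f i ∈ l) ∧
      ∀ i j, (pathGraph (a + 1)).Adj i j → G.Adj (f i) (f j) := by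
  refine ⟨⟨fun i => l[i.val], fun i j hij => Fin.ext ((hl.getElem_inj_iff).1 hij)⟩,
    fun i => List.getElem_mem _, fun i j hij => ?_⟩
  change G.Adj l[i.val] l[j.val]
  rcases pathGraph_adj.1 hij with h | h
  · simpa only [← h] using hc.getElem i (by omega)
  · simpa only [← h] using (hc.getElem j (by omega)).symm

/-- `N` bounds every vertex in use, so that `N, N + 1, …` are fresh. -/
structure PathPair (B : Board) (N n x y : ℕ) (r u : List ℕ) : Prop where
  board_below : B.VerticesBelow N
  path_lt : ∀ v ∈ x :: r ++ y :: u, v < N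
  nodup : (x :: r ++ y :: u).Nodup
  red : (x :: r).IsChain (fromEdgeSet B.1).Adj
  blue : (y :: u).IsChain (fromEdgeSet B.2).Adj
  heads_not_mem : s(x, y) ∉ B.colored
  le_length : n ≤ r.length + u.length

def HasPathPair (n : ℕ) (B : Board) : Prop := ∃ N x y r u, PathPair B N n x y r u

namespace PathPair

variable {B : Board} {N n x y : ℕ} {r u : List ℕ}

theorem x_lt (h : PathPair B N n x y r u) : x < N := h.path_lt x (by simp)

theorem y_lt (h : PathPair B N n x y r u) : y < N := h.path_lt y (by simp)

theorem x_ne_y (h : PathPair B N n x y r u) : x ≠ y :=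
  (List.nodup_append.1 h.nodup).2.2 x (by simp) y (by simp)

theorem swap (h : PathPair B N n x y r u) : PathPair B.swap N n y x u r where
  board_below := h.board_below.swap
  path_lt v hv := h.path_lt v (List.perm_append_comm.mem_iff.1 hv)
  nodup := List.perm_append_comm.nodup_iff.1 h.nodup
  red := h.blue
  blue := h.red
  heads_not_mem := by simpa [Sym2.eq_swap] using h.heads_not_mem
  le_length := by have := h.le_length; omega

theorem nodup_and_lt_of_perm (h : PathPair B N n x y r u) {l new : List ℕ} {N' : ℕ}
    (hl : l.Perm (new ++ (x :: r ++ y :: u))) (hnew : new.Nodup)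
    (hbound : ∀ v ∈ new, N ≤ v ∧ v < N') (hN : N ≤ N') : l.Nodup ∧ ∀ v ∈ l, v < N' := by
  refine ⟨hl.nodup_iff.2 (List.nodup_append.2 ⟨hnew, h.nodup, fun v hv w hw => ?_⟩),
    fun v hv => ?_⟩
  · have := (hbound v hv).1; have := h.path_lt w hw; omega
  · rcases List.mem_append.1 (hl.mem_iff.1 hv) with hv | hv
    · exact (hbound v hv).2
    · exact (h.path_lt v hv).trans_le hN

theorem twoDisjointPaths (h : PathPair B N n x y r u) : TwoDisjointPaths n B := by
  obtain ⟨hr, hu, hdisj⟩ := List.nodup_append.1 h.nodup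
  have := h.le_length
  obtain ⟨f, hf, hfr⟩ := h.red.exists_pathGraph_embedding hr (a := min n r.length)
    (by simp)
  obtain ⟨g, hg, hgu⟩ := h.blue.exists_pathGraph_embedding hu (a := n - min n r.length)
    (by simp; omega)
  exact ⟨_, _, by omega, f, g, hfr, hgu, fun i j => hdisj _ (hf i) _ (hg j)⟩

end PathPair

theorem HasPathPair.swap {n : ℕ} {B : Board} (h : HasPathPair n B) : HasPathPair n B.swap :=
  let ⟨N, x, y, r, u, h⟩ := h
  ⟨N, y, x, u, r, h.swap⟩

namespace PathPair

variable {B : Board} {N n x y : ℕ} {r u : List ℕ}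

theorem hasPathPair_paint_true_paint_false (h : PathPair B N n x y r u) :
    HasPathPair (n + 1) ((B.paint true s(x, y)).paint false s(y, N)) := by
  have hx := h.x_lt
  have hy := h.y_lt
  have hxy := h.x_ne_y
  obtain ⟨hnodup, hlt⟩ := h.nodup_and_lt_of_perm (l := x :: r ++ N :: y :: u) (new := [N])
    (N' := N + 1) (by grind) (by simp) (by simp) (by omega)
  have hblue : (N :: y :: u).IsChain (fromEdgeSet (insert s(y, N) B.2)).Adj :=
    List.isChain_cons_cons.2 ⟨(fromEdgeSet_adj _).2 ⟨by simp [Sym2.eq_swap], by omega⟩,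
      h.blue.imp (fromEdgeSet_mono (Set.subset_insert _ _))⟩
  refine ⟨N + 1, x, N, r, y :: u,
    (h.board_below.paint le_rfl hx hy true).paint (by omega) (by omega) (by omega) false, hlt,
    hnodup, h.red.imp (fromEdgeSet_mono (Set.subset_insert _ _)), hblue, ?_,
    by have := h.le_length; simp; omega⟩
  simp only [Board.colored_paint, Set.mem_insert_iff, Sym2.eq_iff, not_or]
  exact ⟨by omega, by omega, h.board_below.not_mem_colored (Sym2.mem_mk_right _ _) le_rfl⟩

theorem hasPathPair_paint_true_paint_true (h : PathPair B N n x y r u) :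
    HasPathPair (n + 1) ((B.paint true s(x, y)).paint true s(y, N)) := by
  have hx := h.x_lt
  have hy := h.y_lt
  have hbelow := h.board_below.paint le_rfl hx hy true
  have hred : (N :: y :: x :: r).IsChain
      (fromEdgeSet (insert s(y, N) (insert s(x, y) B.1))).Adj :=
    List.isChain_cons_cons.2 ⟨(fromEdgeSet_adj _).2 ⟨by simp [Sym2.eq_swap], by omega⟩,
      List.isChain_cons_cons.2 ⟨(fromEdgeSet_adj _).2 ⟨by simp [Sym2.eq_swap], h.x_ne_y.symm⟩,
        h.red.imp (fromEdgeSet_mono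
          ((Set.subset_insert _ _).trans (Set.subset_insert _ _)))⟩⟩
  cases u with
  | nil =>
    -- The blue path is used up, so a new one starts at a fresh vertex.
    obtain ⟨hnodup, hlt⟩ := h.nodup_and_lt_of_perm (l := N :: y :: x :: r ++ [N + 1])
      (new := [N + 1, N]) (N' := N + 2) (by grind) (by simp) (by simp) (by omega)
    refine ⟨N + 2, N, N + 1, y :: x :: r, [], hbelow.paint (by omega) (by omega) (by omega) true,
      hlt, hnodup, hred, List.isChain_singleton _, ?_,
      by have := h.le_length; simp at this ⊢; omega⟩
    simp only [Board.colored_paint, Set.mem_insert_iff, Sym2.eq_iff, not_or]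
    exact ⟨by omega, by omega, h.board_below.not_mem_colored (Sym2.mem_mk_left _ _) le_rfl⟩
  | cons z u =>
    have hz : z < N := h.path_lt z (by simp)
    have hyz : y ≠ z := fun hyz =>
      (List.nodup_cons.1 (List.nodup_append.1 h.nodup).2.1).1 (by simp [hyz])
    obtain ⟨hnodup, hlt⟩ := h.nodup_and_lt_of_perm (l := N :: y :: x :: r ++ z :: u)
      (new := [N]) (N' := N + 1) (by grind) (by simp) (by simp) (by omega)
    refine ⟨N + 1, N, z, y :: x :: r, u, hbelow.paint (by omega) (by omega) (by omega) true,
      hlt, hnodup, hred, h.blue.tail, ?_, by have := h.le_length; simp at this ⊢; omega⟩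
    simp only [Board.colored_paint, Set.mem_insert_iff, Sym2.eq_iff, not_or]
    exact ⟨by omega, by omega, h.board_below.not_mem_colored (Sym2.mem_mk_left _ _) le_rfl⟩

theorem forcesIn_paint_true (h : PathPair B N n x y r u) :
    ForcesIn (HasPathPair (n + 1)) 1 (B.paint true s(x, y)) := by
  have hx := h.x_lt
  have hy := h.y_lt
  have hxy := h.x_ne_y
  refine .move s(y, N) ⟨by simpa using hy.ne, ?_⟩ fun c => .win ?_
  · simp only [Board.colored_paint, Set.mem_insert_iff, Sym2.eq_iff, not_or]
    exact ⟨by omega, h.board_below.not_mem_colored (Sym2.mem_mk_right _ _) le_rfl⟩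
  cases c
  · exact h.hasPathPair_paint_true_paint_false
  · exact h.hasPathPair_paint_true_paint_true

theorem forcesIn_succ (h : PathPair B N n x y r u) : ForcesIn (HasPathPair (n + 1)) 2 B :=
  .move s(x, y) ⟨by simpa using h.x_ne_y, h.heads_not_mem⟩ fun
    | true => h.forcesIn_paint_true
    | false => by
      rw [Sym2.eq_swap]
      exact h.swap.forcesIn_paint_true.swap fun _ => HasPathPair.swap

end PathPair

theorem hasPathPair_one_paint_true {B : Board} {N : ℕ} (hB : B.VerticesBelow N) :
    HasPathPair 1 (B.paint true s(N, N + 1)) := by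
  refine ⟨N + 3, N, N + 2, [N + 1], [], hB.paint (by omega) (by omega) (by omega) true,
    by simp, by simp, List.isChain_pair.2 ((fromEdgeSet_adj _).2 ⟨Set.mem_insert _ _, by omega⟩),
    List.isChain_singleton _, ?_, le_rfl⟩
  simp only [Board.colored_paint, Set.mem_insert_iff, Sym2.eq_iff, not_or]
  exact ⟨by omega, hB.not_mem_colored (Sym2.mem_mk_right _ _) (by omega)⟩

theorem forcesIn_hasPathPair_one {B : Board} (hB : B.colored.Finite) :
    ForcesIn (HasPathPair 1) 1 B := by
  obtain ⟨N, hN⟩ := Board.exists_verticesBelow hB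
  refine .move s(N, N + 1) ⟨by simp, hN.not_mem_colored (Sym2.mem_mk_right _ _) (by omega)⟩
    fun c => .win ?_
  cases c
  · exact (hasPathPair_one_paint_true hN.swap).swap
  · exact hasPathPair_one_paint_true hN

theorem HasPathPair.forcesIn_add {n : ℕ} {B : Board} (h : HasPathPair n B) (j : ℕ) :
    ForcesIn (HasPathPair (n + j)) (2 * j) B := by
  induction j with
  | zero => exact .win h
  | succ j ih => exact ih.bind fun _ ⟨_, _, _, _, _, h'⟩ => h'.forcesIn_succ

/-- Grytczuk–Kierstead–Prałat: for every `k ≥ 1`, in every online Ramsey game Builder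
can force, within `2k - 1` rounds, two vertex-disjoint monochromatic paths, one red
and one blue, whose lengths sum to `k`. -/
theorem builder_forces_two_paths (k : ℕ) (hk : 1 ≤ k) (init : Board)
    (hfin : init.colored.Finite) :
    BuilderWinsIn init (TwoDisjointPaths k) (2 * k - 1) := by
  have h := (forcesIn_hasPathPair_one hfin).bind fun _ hB => hB.forcesIn_add (k - 1)
  rw [show 1 + (k - 1) = k by omega, ← show 2 * k - 1 = 1 + 2 * (k - 1) by omega] at h
  exact (h.mono le_rfl fun _ ⟨_, _, _, _, _, hB⟩ => hB.twoDisjointPaths).builderWinsIn hfin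
end

section
/- From an almost blue path to a long blue cycle: let k ≥ 3 be odd and let H be an almost blue path on t ≥ 2k vertices. Let 𝒞 be the family of all cycles of length at least (t − k)/2 and at most t. Then r̃_H(C_k, 𝒞) ≤ k + 1: within k + 1 rounds Builder can force a red C_k or a blue cycle from 𝒞. -/
open SimpleGraph

/-!
Write `k = 2 * n + 1`. Along a blue path `π`, Builder plays the cycle
`π v, π lo, π c, π (lo + 1), π (c + 1), …, π (lo + n - 1), π (c + n - 1)` (`zigzag`). Each of
its chords, together with the segment of `π` between its ends, would close a blue cycle of
length about `c - lo`, so Painter has to paint them all red, and then they form a red `C_k`.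

If the path is blue except possibly for an end edge, `v` is the last vertex of the blue part
and `c` its middle. Otherwise, after reversing the path, its red edge `w s w (s + 1)` lies in
the first half, and Builder first plays `w s w (t - 1)`. Painted blue, it creates the blue
path `w 0, …, w s, w (t - 1), …, w (s + 1)` through all `t` vertices; painted red, it forms
the red path `w (s + 1), w s, w (t - 1)`, which a zigzag on `w (s + 1), …, w (t - 1)` closes
into a red `C_k`.
-/

def Board.paint_s18 (B : Board) (e : Sym2 ℕ) (red : Bool) : Board :=
  if red then (insert e B.1, B.2) else (B.1, insert e B.2)

namespace Board

variable {B : Board} {e : Sym2 ℕ} {red : Bool}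

@[simp] lemma paint_true : B.paint_s18 e true = (insert e B.1, B.2) := rfl

@[simp] lemma paint_false : B.paint_s18 e false = (B.1, insert e B.2) := rfl

lemma colored_paint_s18 : (B.paint_s18 e red).colored = insert e B.colored := by
  cases red <;> simp [colored, Set.insert_union, Set.union_insert]

lemma fst_subset_paint : B.1 ⊆ (B.paint_s18 e red).1 := by
  cases red <;> simp [Set.subset_insert]

lemma snd_subset_paint : B.2 ⊆ (B.paint_s18 e red).2 := by
  cases red <;> simp [Set.subset_insert]

lemma fst_paint_subset : (B.paint_s18 e red).1 ⊆ insert e B.1 := by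
  cases red <;> simp [Set.subset_insert]

end Board

section Play

variable {b b' : BuilderStrat} {p : PainterStrat} {init : Board}

lemma playGame_succ (n : ℕ) :
    playGame b p init (n + 1) =
      (playGame b p init n).paint_s18 (b (playGame b p init n))
        (p (playGame b p init n) (b (playGame b p init n))) :=
  rfl

lemma playGame_add (m n : ℕ) :
    playGame b p init (m + n) = playGame b p (playGame b p init m) n := by
  induction n with
  | zero => rfl
  | succ n ih => rw [← add_assoc, playGame_succ, playGame_succ, ih]

lemma playGame_congr (h : ∀ n, b' (playGame b p init n) = b (playGame b p init n)) (n : ℕ) :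
    playGame b' p init n = playGame b p init n := by
  induction n with
  | zero => rfl
  | succ n ih => rw [playGame_succ, playGame_succ, ih, h]

lemma fst_subset_playGame (n : ℕ) : init.1 ⊆ (playGame b p init n).1 := by
  induction n with
  | zero => exact subset_rfl
  | succ n ih => exact ih.trans Board.fst_subset_paint

lemma snd_subset_playGame (n : ℕ) : init.2 ⊆ (playGame b p init n).2 := by
  induction n with
  | zero => exact subset_rfl
  | succ n ih => exact ih.trans Board.snd_subset_paint

lemma colored_playGame_finite (hfin : init.colored.Finite) (n : ℕ) :
    (playGame b p init n).colored.Finite := by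
  induction n with
  | zero => exact hfin
  | succ n ih => rw [playGame_succ, Board.colored_paint_s18]; exact ih.insert _

lemma colored_subset_playGame (n : ℕ) : init.colored ⊆ (playGame b p init n).colored :=
  Set.union_subset_union (fst_subset_playGame n) (snd_subset_playGame n)

lemma ValidFrom.notMem_fst_playGame (hb : ValidFrom b init) {e : Sym2 ℕ} (he : e ∈ init.2)
    (he' : e ∉ init.1) (n : ℕ) : e ∉ (playGame b p init n).1 := by
  induction n with
  | zero => exact he'
  | succ n ih =>
    intro hmem
    rcases Board.fst_paint_subset (playGame_succ (b := b) (p := p) (init := init) n ▸ hmem)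
      with rfl | h
    · exact (hb p n).2 (colored_subset_playGame n (Or.inr he))
    · exact ih h

end Play

lemma exists_notIsDiag_notMem {E : Set (Sym2 ℕ)} (hE : E.Finite) : ∃ e, ¬e.IsDiag ∧ e ∉ E := by
  have hinj : Function.Injective (fun m : ℕ => s(0, m + 1)) := fun m m' h => by
    simpa using Sym2.eq_iff.mp h
  obtain ⟨_, ⟨m, rfl⟩, hm⟩ := (Set.infinite_range_of_injective hinj).exists_notMem_finite hE
  exact ⟨_, by simp [Sym2.mk_isDiag_iff], hm⟩

namespace BuilderWinsIn

variable {init : Board} {W : Board → Prop}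

lemma mono {m n : ℕ} (h : BuilderWinsIn init W m) (hmn : m ≤ n) : BuilderWinsIn init W n := by
  obtain ⟨b, hb, hwin⟩ := h
  exact ⟨b, hb, fun p => (hwin p).imp fun s hs => ⟨hs.1.trans hmn, hs.2⟩⟩

lemma imp {W' : Board → Prop} {n : ℕ} (h : BuilderWinsIn init W n) (hW : ∀ B, W B → W' B) :
    BuilderWinsIn init W' n := by
  obtain ⟨b, hb, hwin⟩ := h
  exact ⟨b, hb, fun p => (hwin p).imp fun s hs => ⟨hs.1, hW _ hs.2⟩⟩

lemma of_finite (hfin : init.colored.Finite) (hW : W init) : BuilderWinsIn init W 0 := by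
  refine ⟨fun B => Classical.epsilon fun e => ¬e.IsDiag ∧ e ∉ B.colored, fun p n => ?_,
    fun p => ⟨0, le_rfl, hW⟩⟩
  exact Classical.epsilon_spec (exists_notIsDiag_notMem (colored_playGame_finite hfin n))

lemma of_paint {e : Sym2 ℕ} {n : ℕ} (hdiag : ¬e.IsDiag) (hfresh : e ∉ init.colored)
    (hwin : ∀ red : Bool, BuilderWinsIn (init.paint_s18 e red) W n) :
    BuilderWinsIn init W (n + 1) := by
  classical
  choose br hbr hwr using hwin
  let b : BuilderStrat := fun B =>
    if e ∈ B.1 then br true B else if e ∈ B.2 then br false B else e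
  have hb0 : b init = e := by
    simp only [b, if_neg (fun h => hfresh (Or.inl h)), if_neg (fun h => hfresh (Or.inr h))]
  have hagree : ∀ p red m, b (playGame (br red) p (init.paint_s18 e red) m) =
      br red (playGame (br red) p (init.paint_s18 e red) m) := by
    intro p red m
    cases red
    · have h2 : e ∈ (playGame (br false) p (init.paint_s18 e false) m).2 :=
        snd_subset_playGame m (Set.mem_insert e _)
      have h1 := (hbr false).notMem_fst_playGame (p := p) (Set.mem_insert e _)
        (fun h => hfresh (Or.inl h)) m
      simp only [b, if_neg h1, if_pos h2]
    · have h1 : e ∈ (playGame (br true) p (init.paint_s18 e true) m).1 :=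
        fst_subset_playGame m (Set.mem_insert e _)
      simp only [b, if_pos h1]
  have hplay : ∀ p m, playGame b p init (m + 1) =
      playGame (br (p init e)) p (init.paint_s18 e (p init e)) m := by
    intro p m
    rw [add_comm, playGame_add]
    show playGame b p (init.paint_s18 (b init) (p init (b init))) m = _
    rw [hb0]
    exact playGame_congr (hagree p _) m
  refine ⟨b, fun p m => ?_, fun p => ?_⟩
  · cases m with
    | zero => exact hb0 ▸ ⟨hdiag, hfresh⟩
    | succ m => rw [hplay, hagree]; exact hbr _ p m
  · obtain ⟨s, hs, hW⟩ := hwr (p init e) p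
    exact ⟨s + 1, by omega, hplay p s ▸ hW⟩

lemma of_forall_coloring (hfin : init.colored.Finite) (S : Finset (Sym2 ℕ))
    (hS : ∀ e ∈ S, ¬e.IsDiag ∧ e ∉ init.colored)
    (hW : ∀ R ⊆ (S : Set (Sym2 ℕ)), W (init.1 ∪ R, init.2 ∪ (↑S \ R))) :
    BuilderWinsIn init W S.card := by
  classical
  induction S using Finset.induction_on generalizing init with
  | empty => simpa using of_finite hfin (by simpa using hW ∅ (Set.empty_subset _))
  | @insert e S heS ih =>
    rw [Finset.card_insert_of_notMem heS]
    obtain ⟨hdiag, hfresh⟩ := hS e (Finset.mem_insert_self e S)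
    refine of_paint hdiag hfresh fun red => ih ?_ (fun e' he' => ?_) (fun R hR => ?_)
    · rw [Board.colored_paint_s18]; exact hfin.insert e
    · refine ⟨(hS e' (Finset.mem_insert_of_mem he')).1, ?_⟩
      rw [Board.colored_paint_s18, Set.mem_insert_iff, not_or]
      exact ⟨fun h => heS (h ▸ he'), (hS e' (Finset.mem_insert_of_mem he')).2⟩
    · have heR : e ∉ R := fun h => heS (hR h)
      cases red
      · have := hW R (hR.trans (by simp))
        rwa [Finset.coe_insert, Set.insert_sdiff_of_notMem _ heR, Set.union_insert,
          ← Set.insert_union] at this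
      · have := hW (insert e R) (by simpa using Set.insert_subset_insert hR)
        rwa [Finset.coe_insert, Set.insert_sdiff_of_mem _ (Set.mem_insert e R),
          Set.sdiff_insert_of_notMem (by simpa using heS), Set.union_insert,
          ← Set.insert_union] at this

end BuilderWinsIn

lemma Set.InjOn.sym2_mk_eq_iff {f : ℕ → ℕ} {s : Set ℕ} (hf : s.InjOn f) {a b c d : ℕ}
    (ha : a ∈ s) (hb : b ∈ s) (hc : c ∈ s) (hd : d ∈ s) :
    s(f a, f b) = s(f c, f d) ↔ s(a, b) = s(c, d) := by
  simp only [Sym2.eq_iff, hf.eq_iff ha hc, hf.eq_iff ha hd, hf.eq_iff hb hc, hf.eq_iff hb hd]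

lemma Fin.val_eq_add_one_mod_of_val_sub_eq_one {ℓ : ℕ} {u v : Fin ℓ} (h : (v - u).val = 1) :
    v.val = (u.val + 1) % ℓ := by
  rw [Fin.sub_def] at h
  have := u.isLt
  have := v.isLt
  simp only at h
  rcases Nat.lt_or_ge (ℓ - u.val + v.val) ℓ with hlt | hge
  · rw [Nat.mod_eq_of_lt hlt] at h
    rw [show u.val + 1 = ℓ by omega, Nat.mod_self]
    omega
  · rw [Nat.mod_eq_sub_mod hge, Nat.mod_eq_of_lt (by omega)] at h
    rw [Nat.mod_eq_of_lt (by omega)]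
    omega

lemma hasCopy_cycleGraph {E : Set (Sym2 ℕ)} {ℓ : ℕ} {f : ℕ → ℕ} (hf : (Set.Iio ℓ).InjOn f)
    (hE : ∀ i < ℓ, s(f i, f ((i + 1) % ℓ)) ∈ E) : HasCopy (cycleGraph ℓ) (fromEdgeSet E) := by
  have hinj : Function.Injective fun i : Fin ℓ => f i := fun i j h =>
    Fin.ext (hf i.isLt j.isLt h)
  refine ⟨⟨_, hinj⟩, fun i j hij => ?_⟩
  refine (fromEdgeSet_adj E).mpr ⟨?_, hinj.ne ((cycleGraph ℓ).ne_of_adj hij)⟩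
  show s(f i, f j) ∈ E
  rcases cycleGraph_adj'.mp hij with h | h
  · rw [Sym2.eq_swap, Fin.val_eq_add_one_mod_of_val_sub_eq_one h]
    exact hE j j.isLt
  · rw [Fin.val_eq_add_one_mod_of_val_sub_eq_one h]
    exact hE i i.isLt

/-- `E` contains a path from `u` to `v` on `ℓ` vertices (`ℓ - 1` edges). -/
def HasPath (E : Set (Sym2 ℕ)) (u v ℓ : ℕ) : Prop :=
  ∃ f : ℕ → ℕ, (Set.Iio ℓ).InjOn f ∧ f 0 = u ∧ f (ℓ - 1) = v ∧
    ∀ i, i + 1 < ℓ → s(f i, f (i + 1)) ∈ E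

namespace HasPath

variable {E : Set (Sym2 ℕ)} {u v ℓ : ℕ}

lemma mono {E' : Set (Sym2 ℕ)} (h : HasPath E u v ℓ) (hE : E ⊆ E') : HasPath E' u v ℓ := by
  obtain ⟨f, hf, h0, h1, hpath⟩ := h
  exact ⟨f, hf, h0, h1, fun i hi => hE (hpath i hi)⟩

lemma reverse (h : HasPath E u v ℓ) : HasPath E v u ℓ := by
  obtain ⟨f, hf, h0, h1, hpath⟩ := h
  refine ⟨fun i => f (ℓ - 1 - i), fun i hi j hj hij => ?_, by simpa using h1, ?_, fun i hi => ?_⟩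
  · simp only [Set.mem_Iio] at hi hj
    have := hf (show ℓ - 1 - i < ℓ by omega) (show ℓ - 1 - j < ℓ by omega) hij
    omega
  · rcases Nat.eq_zero_or_pos ℓ with rfl | hℓ
    · simpa using h0
    · simpa [show ℓ - 1 - (ℓ - 1) = 0 by omega] using h0
  · show s(f (ℓ - 1 - i), f (ℓ - 1 - (i + 1))) ∈ E
    rw [Sym2.eq_swap, show ℓ - 1 - i = ℓ - 1 - (i + 1) + 1 by omega]
    exact hpath _ (by omega)

lemma ne (h : HasPath E u v ℓ) (hℓ : 2 ≤ ℓ) : u ≠ v := by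
  obtain ⟨f, hf, rfl, rfl, -⟩ := h
  exact fun h => absurd (hf (by simp; omega) (by simp; omega) h) (by omega)

lemma hasCopy_cycleGraph (h : HasPath E u v ℓ) (huv : s(u, v) ∈ E) :
    HasCopy (cycleGraph ℓ) (fromEdgeSet E) := by
  obtain ⟨f, hf, rfl, rfl, hpath⟩ := h
  refine _root_.hasCopy_cycleGraph hf fun i hi => ?_
  rcases Nat.lt_or_ge (i + 1) ℓ with h | h
  · rw [Nat.mod_eq_of_lt h]; exact hpath i h
  · rw [show i = ℓ - 1 by omega, Nat.sub_add_cancel (by omega), Nat.mod_self, Sym2.eq_swap]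
    exact huv

end HasPath

lemma hasPath_segment {E : Set (Sym2 ℕ)} {π : ℕ → ℕ} {T a b : ℕ} (hπ : (Set.Iio T).InjOn π)
    (hab : a ≤ b) (hbT : b < T) (hE : ∀ j, a ≤ j → j < b → s(π j, π (j + 1)) ∈ E) :
    HasPath E (π a) (π b) (b - a + 1) := by
  refine ⟨fun i => π (a + i), fun i hi j hj hij => ?_, by simp, by simp [hab], fun i hi => ?_⟩
  · simp only [Set.mem_Iio] at hi hj
    have := hπ (show a + i < T by omega) (show a + j < T by omega) hij
    omega
  · exact hE (a + i) (by omega) (by omega)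

def RedOrBlueCycle (k : ℕ) (P : ℕ → Prop) (B : Board) : Prop :=
  RedCopy (cycleGraph k) B ∨ ∃ ℓ, 3 ≤ ℓ ∧ P ℓ ∧ BlueCopy (cycleGraph ℓ) B

def RedOrClosesBlueCycle (B : Board) (P : ℕ → Prop) (u v : ℕ) : Prop :=
  s(u, v) ∈ B.1 ∨ s(u, v) ∉ B.colored ∧ ∃ ℓ, 3 ≤ ℓ ∧ P ℓ ∧ HasPath B.2 u v ℓ

lemma RedOrClosesBlueCycle.symm {B : Board} {P : ℕ → Prop} {u v : ℕ}
    (h : RedOrClosesBlueCycle B P u v) : RedOrClosesBlueCycle B P v u := by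
  rw [RedOrClosesBlueCycle, Sym2.eq_swap]
  exact h.imp_right fun ⟨hfresh, ℓ, hℓ, hP, hpath⟩ => ⟨hfresh, ℓ, hℓ, hP, hpath.reverse⟩

lemma redOrClosesBlueCycle_of_segment {B : Board} {P : ℕ → Prop} {π : ℕ → ℕ} {T a b : ℕ}
    (hπ : (Set.Iio T).InjOn π) (hab : a + 2 ≤ b) (hbT : b < T)
    (hblue : ∀ j, a ≤ j → j < b → s(π j, π (j + 1)) ∈ B.2)
    (hfresh : s(π a, π b) ∉ B.colored) (hP : P (b - a + 1)) :
    RedOrClosesBlueCycle B P (π a) (π b) :=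
  Or.inr ⟨hfresh, b - a + 1, by omega, hP, hasPath_segment hπ (by omega) hbT hblue⟩

theorem BuilderWinsIn.of_cycle {init : Board} {P : ℕ → Prop} (hfin : init.colored.Finite)
    {k : ℕ} {f : ℕ → ℕ} (hf : (Set.Iio k).InjOn f)
    (hedge : ∀ i < k, RedOrClosesBlueCycle init P (f i) (f ((i + 1) % k))) :
    BuilderWinsIn init (RedOrBlueCycle k P) k := by
  classical
  set e : ℕ → Sym2 ℕ := fun i => s(f i, f ((i + 1) % k))
  set S := ((Finset.range k).image e).filter (· ∉ init.1)
  have hmemS : ∀ x ∈ S, ∃ i < k, e i = x ∧ e i ∉ init.colored ∧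
      ∃ ℓ, 3 ≤ ℓ ∧ P ℓ ∧ HasPath init.2 (f i) (f ((i + 1) % k)) ℓ := by
    intro x hx
    obtain ⟨hx, hred⟩ := Finset.mem_filter.mp hx
    obtain ⟨i, hi, rfl⟩ := Finset.mem_image.mp hx
    exact ⟨i, Finset.mem_range.mp hi, rfl, (hedge i (Finset.mem_range.mp hi)).resolve_left hred⟩
  refine (BuilderWinsIn.of_forall_coloring hfin S (fun x hx => ?_) fun R hR => ?_).mono
    (Finset.card_filter_le _ _ |>.trans Finset.card_image_le |>.trans (Finset.card_range k).le)
  · obtain ⟨i, -, rfl, hfresh, ℓ, hℓ, -, hpath⟩ := hmemS x hx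
    exact ⟨fun h => hpath.ne (by omega) (Sym2.mk_isDiag_iff.mp h), hfresh⟩
  by_cases hblue : ∃ x ∈ (S : Set (Sym2 ℕ)), x ∉ R
  · obtain ⟨x, hxS, hxR⟩ := hblue
    obtain ⟨i, -, rfl, -, ℓ, hℓ, hP, hpath⟩ := hmemS x hxS
    exact Or.inr ⟨ℓ, hℓ, hP, (hpath.mono Set.subset_union_left).hasCopy_cycleGraph
      (Or.inr ⟨hxS, hxR⟩)⟩
  · push Not at hblue
    refine Or.inl (hasCopy_cycleGraph hf fun i hi => ?_)
    by_cases hred : e i ∈ init.1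
    · exact Or.inl hred
    · exact Or.inr (hblue _ (Finset.mem_filter.mpr
        ⟨Finset.mem_image_of_mem e (Finset.mem_range.mpr hi), hred⟩))

/-- The cycle `lo, c, lo + 1, c + 1, …, lo + n - 1, c + n - 1, v` of length `2 * n + 1`. -/
def zigzag (n lo c v i : ℕ) : ℕ :=
  if i = 2 * n then v else if i % 2 = 0 then lo + i / 2 else c + i / 2

section Zigzag

variable {n lo c v : ℕ}

lemma zigzag_mapsTo {T : ℕ} (hlc : lo + n ≤ c) (hcT : c + n ≤ T) (hvT : v < T) :
    Set.MapsTo (zigzag n lo c v) (Set.Iio (2 * n + 1)) (Set.Iio T) := by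
  intro i hi
  simp only [Set.mem_Iio, zigzag] at hi ⊢
  split_ifs <;> omega

lemma zigzag_injOn (hlc : lo + n ≤ c) (hv : v < lo ∨ c + n ≤ v) :
    (Set.Iio (2 * n + 1)).InjOn (zigzag n lo c v) := by
  intro i hi j hj h
  simp only [Set.mem_Iio, zigzag] at hi hj h
  split_ifs at h <;> omega

lemma zigzag_step (hn : 0 < n) {i : ℕ} (hi : i < 2 * n + 1) :
    (zigzag n lo c v i = v ∧ zigzag n lo c v ((i + 1) % (2 * n + 1)) = lo) ∨
    (zigzag n lo c v i = c + n - 1 ∧ zigzag n lo c v ((i + 1) % (2 * n + 1)) = v) ∨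
    (∃ j < n, zigzag n lo c v i = lo + j ∧ zigzag n lo c v ((i + 1) % (2 * n + 1)) = c + j) ∨
    (∃ j, j + 1 < n ∧ zigzag n lo c v i = c + j ∧
      zigzag n lo c v ((i + 1) % (2 * n + 1)) = lo + j + 1) := by
  rcases Nat.lt_or_ge (i + 1) (2 * n + 1) with h | h
  · rw [Nat.mod_eq_of_lt h]
    simp only [zigzag]
    split_ifs <;> first
      | omega
      | exact Or.inr (Or.inl ⟨by omega, rfl⟩)
      | exact Or.inr (Or.inr (Or.inl ⟨i / 2, by omega, rfl, by omega⟩))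
      | exact Or.inr (Or.inr (Or.inr ⟨i / 2, by omega, rfl, by omega⟩))
  · rw [show i = 2 * n by omega, Nat.mod_self]
    simp [zigzag, hn.ne']

theorem BuilderWinsIn.of_zigzag {init : Board} {P : ℕ → Prop} (hfin : init.colored.Finite)
    {π : ℕ → ℕ} {T : ℕ} (hπ : (Set.Iio T).InjOn π) (hn : 0 < n) (hlc : lo + n ≤ c)
    (hcT : c + n ≤ T) (hvT : v < T) (hv : v < lo ∨ c + n ≤ v)
    (hfirst : RedOrClosesBlueCycle init P (π v) (π lo))
    (hinner : ∀ j < n, RedOrClosesBlueCycle init P (π (lo + j)) (π (c + j)))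
    (hinner' : ∀ j, j + 1 < n → RedOrClosesBlueCycle init P (π (c + j)) (π (lo + j + 1)))
    (hlast : RedOrClosesBlueCycle init P (π (c + n - 1)) (π v)) :
    BuilderWinsIn init (RedOrBlueCycle (2 * n + 1) P) (2 * n + 1) := by
  refine BuilderWinsIn.of_cycle hfin (f := π ∘ zigzag n lo c v)
    (hπ.comp (zigzag_injOn hlc hv) (zigzag_mapsTo hlc hcT hvT)) fun i hi => ?_
  simp only [Function.comp_apply]
  rcases zigzag_step hn hi with ⟨h, h'⟩ | ⟨h, h'⟩ | ⟨j, hj, h, h'⟩ | ⟨j, hj, h, h'⟩ <;>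
    rw [h, h']
  exacts [hfirst, hlast, hinner j hj, hinner' j hj]

end Zigzag

/-- Builder plays the `zigzag` cycle with `v = T - 1`, `lo = 0` and `c + n - 1 = T / 2`.
It uses no chord from `π (T - 1)` into the first half of the path, so those may be colored,
as one is in `pathBoard_paint_blue`. -/
theorem BuilderWinsIn.of_bluePath {init : Board} {P : ℕ → Prop} (hfin : init.colored.Finite)
    {π : ℕ → ℕ} {T n : ℕ} (hπ : (Set.Iio T).InjOn π) (hn : 0 < n) (hT : 4 * n + 1 ≤ T)
    (hblue : ∀ i, i + 1 < T → s(π i, π (i + 1)) ∈ init.2)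
    (hfresh : ∀ a b, a + 2 ≤ b → b < T → (a = 0 ∨ b + 1 < T ∨ T < 2 * a + 2) →
      s(π a, π b) ∉ init.colored)
    (hP : ∀ ℓ, T + 2 ≤ 2 * ℓ + (2 * n + 1) → ℓ ≤ T → P ℓ) :
    BuilderWinsIn init (RedOrBlueCycle (2 * n + 1) P) (2 * n + 1) := by
  have hchord : ∀ a b, a + 2 ≤ b → b < T → (a = 0 ∨ b + 1 < T ∨ T < 2 * a + 2) →
      T + 2 ≤ 2 * (b - a + 1) + (2 * n + 1) → RedOrClosesBlueCycle init P (π a) (π b) :=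
    fun a b hab hbT hend hlen => redOrClosesBlueCycle_of_segment hπ hab hbT
      (fun j _ hj => hblue j (by omega)) (hfresh a b hab hbT hend) (hP _ hlen (by omega))
  refine BuilderWinsIn.of_zigzag hfin hπ hn (lo := 0) (c := T / 2 + 1 - n) (v := T - 1)
    (by omega) (by omega) (by omega) (by omega) ?_ (fun j hj => ?_) (fun j hj => ?_) ?_
  · exact (hchord 0 (T - 1) (by omega) (by omega) (by omega) (by omega)).symm
  · exact hchord (0 + j) _ (by omega) (by omega) (by omega) (by omega)
  · exact (hchord (0 + j + 1) _ (by omega) (by omega) (by omega) (by omega)).symm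
  · exact hchord _ (T - 1) (by omega) (by omega) (by omega) (by omega)

def pathBoard (t : ℕ) (w : ℕ → ℕ) (S : Set ℕ) : Board :=
  ({e | ∃ i, i + 1 < t ∧ i ∈ S ∧ e = s(w i, w (i + 1))},
   {e | ∃ i, i + 1 < t ∧ i ∉ S ∧ e = s(w i, w (i + 1))})

section PathBoard

variable {t n : ℕ} {w : ℕ → ℕ} {S : Set ℕ} {P : ℕ → Prop}

lemma pathBoard_colored_finite : (pathBoard t w S).colored.Finite := by
  refine ((Set.finite_Iio t).image fun i => s(w i, w (i + 1))).subset ?_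
  rintro _ (⟨i, hi, -, rfl⟩ | ⟨i, hi, -, rfl⟩) <;> exact ⟨i, Set.mem_Iio.mpr (by omega), rfl⟩

lemma adjacent_of_mem_colored_pathBoard (hw : (Set.Iio t).InjOn w) {a b : ℕ} (ha : a < t)
    (hb : b < t) (h : s(w a, w b) ∈ (pathBoard t w S).colored) : a + 1 = b ∨ b + 1 = a := by
  obtain ⟨i, hi, -, he⟩ | ⟨i, hi, -, he⟩ := h <;>
  · rw [hw.sym2_mk_eq_iff ha hb (Set.mem_Iio.mpr (by omega)) (show i + 1 < t from hi),
      Sym2.eq_iff] at he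
    omega

lemma pathBoard_reverse :
    pathBoard t (fun i => w (t - 1 - i)) {i | t - 2 - i ∈ S} = pathBoard t w S := by
  have key : ∀ P : ℕ → Prop,
      {e | ∃ i, i + 1 < t ∧ P (t - 2 - i) ∧ e = s(w (t - 1 - i), w (t - 1 - (i + 1)))} =
      {e | ∃ i, i + 1 < t ∧ P i ∧ e = s(w i, w (i + 1))} := by
    intro P
    ext e
    constructor
    · rintro ⟨i, hi, hPi, rfl⟩
      refine ⟨t - 2 - i, by omega, hPi, ?_⟩
      rw [Sym2.eq_swap, show t - 1 - i = t - 2 - i + 1 by omega,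
        show t - 1 - (i + 1) = t - 2 - i by omega]
    · rintro ⟨i, hi, hPi, rfl⟩
      refine ⟨t - 2 - i, by omega, by rwa [show t - 2 - (t - 2 - i) = i by omega], ?_⟩
      rw [Sym2.eq_swap, show t - 1 - (t - 2 - i) = i + 1 by omega,
        show t - 1 - (t - 2 - i + 1) = i by omega]
  exact Prod.ext (key (· ∈ S)) (key (· ∉ S))

theorem BuilderWinsIn.pathBoard_of_blue_tail (hw : (Set.Iio t).InjOn w) (hn : 0 < n)
    (ht : 4 * n + 2 ≤ t) (hS : ∀ i, 0 < i → i + 1 < t → i ∉ S)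
    (hP : ∀ ℓ, t + 1 ≤ 2 * ℓ + (2 * n + 1) → ℓ ≤ t → P ℓ) :
    BuilderWinsIn (pathBoard t w S) (RedOrBlueCycle (2 * n + 1) P) (2 * n + 1) := by
  have hw' : (Set.Iio (t - 1)).InjOn fun i => w (i + 1) := fun a ha b hb h => by
    simp only [Set.mem_Iio] at ha hb
    have := hw (Set.mem_Iio.mpr (by omega)) (Set.mem_Iio.mpr (by omega)) h
    omega
  refine BuilderWinsIn.of_bluePath pathBoard_colored_finite hw' hn (by omega)
    (fun i hi => ⟨i + 1, by omega, hS _ (by omega) (by omega), rfl⟩)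
    (fun a b hab hb _ h => ?_) (fun ℓ h1 h2 => hP ℓ (by omega) (by omega))
  have := adjacent_of_mem_colored_pathBoard hw (a := a + 1) (b := b + 1) (by omega)
    (by omega) h
  omega

theorem BuilderWinsIn.pathBoard_paint_blue (hw : (Set.Iio t).InjOn w) (hn : 0 < n)
    (ht : 4 * n + 2 ≤ t) {s : ℕ} (hs : 0 < s) (hst : 2 * s + 2 ≤ t)
    (hS : ∀ i, i + 1 < t → (i ∈ S ↔ i = s))
    (hP : ∀ ℓ, t + 1 ≤ 2 * ℓ + (2 * n + 1) → ℓ ≤ t → P ℓ) :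
    BuilderWinsIn ((pathBoard t w S).paint_s18 s(w s, w (t - 1)) false)
      (RedOrBlueCycle (2 * n + 1) P) (2 * n + 1) := by
  set σ : ℕ → ℕ := fun p => if p ≤ s then p else t + s - p
  have hσ : ∀ p, p ≤ s ∧ σ p = p ∨ s < p ∧ σ p = t + s - p := fun p => by
    by_cases h : p ≤ s <;> simp [σ, h]; omega
  have hlt : ∀ {i}, i < t → i ∈ Set.Iio t := Set.mem_Iio.mpr
  refine BuilderWinsIn.of_bluePath (π := w ∘ σ) (T := t)
    (by rw [Board.colored_paint_s18]; exact pathBoard_colored_finite.insert _)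
    (fun p hp q hq h => ?_) hn (by omega) (fun i hi => ?_) (fun p q hpq hq hend => ?_)
    (fun ℓ h1 h2 => hP ℓ (by omega) h2)
  · simp only [Set.mem_Iio] at hp hq
    have := hw (hlt (show σ p < t by grind)) (hlt (show σ q < t by grind)) h
    grind
  · simp only [Function.comp_apply, Board.paint_false, Set.mem_insert_iff]
    rcases Nat.lt_trichotomy i s with h | rfl | h
    · exact Or.inr ⟨i, by omega, by rw [hS i (by omega)]; omega, by simp [σ, h.le, h]⟩
    · left; simp [σ, show t + i - (i + 1) = t - 1 by omega]
    · refine Or.inr ⟨t + s - (i + 1), by omega, by rw [hS _ (by omega)]; omega, ?_⟩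
      simp only [σ, if_neg (show ¬i ≤ s by omega), if_neg (show ¬i + 1 ≤ s by omega)]
      rw [Sym2.eq_swap, show t + s - (i + 1) + 1 = t + s - i by omega]
  · simp only [Function.comp_apply, Board.colored_paint_s18, Set.mem_insert_iff, not_or]
    have hσp := hσ p
    have hσq := hσ q
    refine ⟨fun h => ?_, fun h => ?_⟩
    · rw [hw.sym2_mk_eq_iff (hlt (by omega)) (hlt (by omega)) (hlt (by omega)) (hlt (by omega)),
        Sym2.eq_iff] at h
      omega
    · have := adjacent_of_mem_colored_pathBoard hw (by omega) (by omega) h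
      omega

theorem BuilderWinsIn.pathBoard_paint_red (hw : (Set.Iio t).InjOn w) (hn : 0 < n)
    (ht : 4 * n + 2 ≤ t) {s : ℕ} (hst : 2 * s + 2 ≤ t)
    (hS : ∀ i, i + 1 < t → (i ∈ S ↔ i = s))
    (hP : ∀ ℓ, t + 1 ≤ 2 * ℓ + (2 * n + 1) → ℓ ≤ t → P ℓ) :
    BuilderWinsIn ((pathBoard t w S).paint_s18 s(w s, w (t - 1)) true)
      (RedOrBlueCycle (2 * n + 1) P) (2 * n + 1) := by
  have hlt : ∀ {i}, i < t → i ∈ Set.Iio t := Set.mem_Iio.mpr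
  have hchord : ∀ a b, s < a → a + 2 ≤ b → b < t → t + 1 ≤ 2 * (b - a + 1) + (2 * n + 1) →
      RedOrClosesBlueCycle ((pathBoard t w S).paint_s18 s(w s, w (t - 1)) true) P (w a) (w b) := by
    intro a b hsa hab hbt hlen
    refine redOrClosesBlueCycle_of_segment hw hab hbt
      (fun j hj hjb => ⟨j, by omega, by rw [hS j (by omega)]; omega, rfl⟩) ?_
      (hP _ hlen (by omega))
    rw [Board.colored_paint_s18, Set.mem_insert_iff, not_or,
      hw.sym2_mk_eq_iff (hlt (by omega)) (hlt hbt) (hlt (by omega)) (hlt (by omega)), Sym2.eq_iff]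
    exact ⟨by omega, fun h => by
      have := adjacent_of_mem_colored_pathBoard hw (by omega) hbt h; omega⟩
  refine BuilderWinsIn.of_zigzag (π := w) (T := t) (lo := s + 1) (c := t - n) (v := s)
    (by rw [Board.colored_paint_s18]; exact pathBoard_colored_finite.insert _) hw hn
    (by omega) (by omega) (by omega) (by omega) ?_ (fun j hj => ?_) (fun j hj => ?_) ?_
  · exact Or.inl (Or.inr ⟨s, by omega, (hS s (by omega)).mpr rfl, rfl⟩)
  · exact hchord _ _ (by omega) (by omega) (by omega) (by omega)
  · exact (hchord _ _ (by omega) (by omega) (by omega) (by omega)).symm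
  · left
    rw [show t - n + n - 1 = t - 1 by omega, Sym2.eq_swap]
    exact Set.mem_insert _ _

theorem BuilderWinsIn.pathBoard_of_red_edge (hw : (Set.Iio t).InjOn w) (hn : 0 < n)
    (ht : 4 * n + 2 ≤ t) {s : ℕ} (hs : 0 < s) (hst : 2 * s + 2 ≤ t)
    (hS : ∀ i, i + 1 < t → (i ∈ S ↔ i = s))
    (hP : ∀ ℓ, t + 1 ≤ 2 * ℓ + (2 * n + 1) → ℓ ≤ t → P ℓ) :
    BuilderWinsIn (pathBoard t w S) (RedOrBlueCycle (2 * n + 1) P) (2 * n + 1 + 1) := by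
  have hne : w s ≠ w (t - 1) := fun h =>
    absurd (hw (Set.mem_Iio.mpr (by omega)) (Set.mem_Iio.mpr (by omega)) h) (by omega)
  refine BuilderWinsIn.of_paint (Sym2.mk_isDiag_iff.not.mpr hne) (fun h => ?_) fun red => ?_
  · have := adjacent_of_mem_colored_pathBoard hw (by omega) (by omega) h
    omega
  · cases red
    · exact BuilderWinsIn.pathBoard_paint_blue hw hn ht hs hst hS hP
    · exact BuilderWinsIn.pathBoard_paint_red hw hn ht hst hS hP

theorem BuilderWinsIn.pathBoard_of_firstHalf (hw : (Set.Iio t).InjOn w) (hn : 0 < n)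
    (ht : 4 * n + 2 ≤ t) (hS : S.Subsingleton) (hhalf : ∀ i ∈ S, i + 1 < t → 2 * i + 2 ≤ t)
    (hP : ∀ ℓ, t + 1 ≤ 2 * ℓ + (2 * n + 1) → ℓ ≤ t → P ℓ) :
    BuilderWinsIn (pathBoard t w S) (RedOrBlueCycle (2 * n + 1) P) (2 * n + 1 + 1) := by
  by_cases hred : ∃ s ∈ S, 0 < s ∧ s + 1 < t
  · obtain ⟨s, hsS, hs, hst⟩ := hred
    exact BuilderWinsIn.pathBoard_of_red_edge hw hn ht hs (hhalf s hsS hst)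
      (fun i _ => ⟨fun hi => hS hi hsS, fun h => h ▸ hsS⟩) hP
  · push Not at hred
    exact (BuilderWinsIn.pathBoard_of_blue_tail hw hn ht
      (fun i hi hit hiS => absurd (hred i hiS hi) (by omega)) hP).mono (by omega)

theorem BuilderWinsIn.pathBoard_of_subsingleton (hw : (Set.Iio t).InjOn w) (hn : 0 < n)
    (ht : 4 * n + 2 ≤ t) (hS : S.Subsingleton)
    (hP : ∀ ℓ, t + 1 ≤ 2 * ℓ + (2 * n + 1) → ℓ ≤ t → P ℓ) :
    BuilderWinsIn (pathBoard t w S) (RedOrBlueCycle (2 * n + 1) P) (2 * n + 1 + 1) := by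
  by_cases hhalf : ∀ i ∈ S, i + 1 < t → 2 * i + 2 ≤ t
  · exact BuilderWinsIn.pathBoard_of_firstHalf hw hn ht hS hhalf hP
  push Not at hhalf
  obtain ⟨s, hsS, hst, hs⟩ := hhalf
  have hS' : {i | t - 2 - i ∈ S} = {t - 2 - s} := by
    ext i
    refine ⟨fun hi => ?_, fun hi => ?_⟩
    · have := hS hi hsS
      rw [Set.mem_singleton_iff]
      omega
    · rwa [Set.mem_singleton_iff.mp hi, Set.mem_ofPred, show t - 2 - (t - 2 - s) = s by omega]
  rw [← pathBoard_reverse, hS']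
  refine BuilderWinsIn.pathBoard_of_firstHalf (fun x hx y hy h => ?_) hn ht
    Set.subsingleton_singleton (fun i hi _ => ?_) hP
  · simp only [Set.mem_Iio] at hx hy
    have := hw (Set.mem_Iio.mpr (by omega)) (Set.mem_Iio.mpr (by omega)) h
    omega
  · rw [Set.mem_singleton_iff.mp hi]
    omega

end PathBoard

/-- From an almost blue path to a long blue cycle: for odd `k ≥ 3` and an almost blue
path on `t ≥ 2k` vertices (at most one edge red), within `k + 1` rounds Builder can
force a red `C_k` or a blue cycle of length at least `(t - k)/2` and at most `t`. -/
theorem almost_blue_path_to_cycle (k t : ℕ) (hk : 3 ≤ k) (hko : Odd k)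
    (ht : 2 * k ≤ t) (w : ℕ → ℕ)
    (hw : ∀ x y, x < t → y < t → w x = w y → x = y)
    (S : Set ℕ) (hS : S.Subsingleton) :
    BuilderWinsIn
      ({e | ∃ i : ℕ, i + 1 < t ∧ i ∈ S ∧ e = s(w i, w (i + 1))},
       {e | ∃ i : ℕ, i + 1 < t ∧ i ∉ S ∧ e = s(w i, w (i + 1))})
      (fun B => RedCopy (SimpleGraph.cycleGraph k) B ∨
        ∃ ℓ : ℕ, 3 ≤ ℓ ∧ t - k ≤ 2 * ℓ ∧ ℓ ≤ t ∧
          BlueCopy (SimpleGraph.cycleGraph ℓ) B)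
      (k + 1) := by
  obtain ⟨n, rfl⟩ := hko
  have hwin := BuilderWinsIn.pathBoard_of_subsingleton (w := w) (S := S)
    (fun x hx y hy => hw x y hx hy) (by omega : 0 < n) (by omega) hS
    (P := fun ℓ => t - (2 * n + 1) ≤ 2 * ℓ ∧ ℓ ≤ t) fun ℓ h1 h2 => ⟨by omega, h2⟩
  exact hwin.imp fun B => Or.imp_right fun ⟨ℓ, hℓ, ⟨h1, h2⟩, hcopy⟩ => ⟨ℓ, hℓ, h1, h2, hcopy⟩
end
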